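/- arXiv:2101.04894 — 13 statements merged into one kernel-verified Lean document; each statement's English description precedes it below -/
import Mathlib

section
/- Let X be a T0 topological space and let A be a closed KF-set of X such that ↓(A ∩ K) is closed in X for every compact saturated subset K of X. Then A is a directed subset of X with respect to the specialization order. -/
/-- The specialization order of a topological space: `x ≤ y` iff `x ∈ cl {y}`. -/
def SpecLE {X : Type*} [TopologicalSpace X] (x y : X) : Prop := x ∈ closure ({y} : Set X)

/-- A subset is directed (w.r.t. the specialization order) if it is nonempty and
every pair of its elements has an upper bound in it. -/
def DirectedSubset {X : Type*} [TopologicalSpace X] (D : Set X) : Prop :=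
  D.Nonempty ∧ ∀ x ∈ D, ∀ y ∈ D, ∃ z ∈ D, SpecLE x z ∧ SpecLE y z

/-- `↓A` with respect to the specialization order. -/
def SpecLower {X : Type*} [TopologicalSpace X] (A : Set X) : Set X :=
  {x | ∃ a ∈ A, SpecLE x a}

/-- Saturated = upper set in the specialization order. -/
def SatUpper {X : Type*} [TopologicalSpace X] (K : Set X) : Prop :=
  ∀ x ∈ K, ∀ y, SpecLE x y → y ∈ K

/-- A family of sets is filtered. -/
def FilteredFam {X : Type*} (𝒦 : Set (Set X)) : Prop :=
  ∀ K₁ ∈ 𝒦, ∀ K₂ ∈ 𝒦, ∃ K₃ ∈ 𝒦, K₃ ⊆ K₁ ∩ K₂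

/-- `A` is a KF-set: there is a nonempty filtered family `𝒦` of compact saturated sets such
that `cl A` is a minimal closed set intersecting all members of `𝒦`. -/
def IsKFSet {X : Type*} [TopologicalSpace X] (A : Set X) : Prop :=
  A.Nonempty ∧ ∃ 𝒦 : Set (Set X), 𝒦.Nonempty ∧ (∀ K ∈ 𝒦, IsCompact K ∧ SatUpper K) ∧
    FilteredFam 𝒦 ∧ (∀ K ∈ 𝒦, (closure A ∩ K).Nonempty) ∧
    (∀ C : Set X, IsClosed C → C ⊆ closure A → (∀ K ∈ 𝒦, (C ∩ K).Nonempty) → C = closure A)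

lemma specLE_refl {X : Type*} [TopologicalSpace X] (x : X) : SpecLE x x :=
  subset_closure rfl

lemma specLE_trans {X : Type*} [TopologicalSpace X] {x y z : X}
    (h1 : SpecLE x y) (h2 : SpecLE y z) : SpecLE x z := by
  have hsub : closure ({y} : Set X) ⊆ closure {z} :=
    closure_minimal (Set.singleton_subset_iff.mpr h2) isClosed_closure
  exact hsub h1

lemma mem_open_of_specLE {X : Type*} [TopologicalSpace X] {U : Set X} (hU : IsOpen U)
    {x z : X} (hx : x ∈ U) (hxz : SpecLE x z) : z ∈ U := by
  rcases mem_closure_iff.mp hxz U hU hx with ⟨w, hwU, hw⟩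
  rwa [Set.mem_singleton_iff.mp hw] at hwU

lemma isCompact_upSet {X : Type*} [TopologicalSpace X] (x : X) :
    IsCompact {z | SpecLE x z} := by
  rw [isCompact_iff_finite_subcover]
  intro ι U hU hcover
  have hx : x ∈ {z | SpecLE x z} := specLE_refl x
  rcases Set.mem_iUnion.mp (hcover hx) with ⟨i, hi⟩
  refine ⟨{i}, fun z hz => ?_⟩
  have : z ∈ U i := mem_open_of_specLE (hU i) hi hz
  simp only [Finset.mem_singleton, Set.mem_iUnion]
  exact ⟨i, rfl, this⟩

lemma satUpper_upSet {X : Type*} [TopologicalSpace X] (x : X) :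
    SatUpper {z | SpecLE x z} := by
  intro a ha b hab
  exact specLE_trans ha hab

/-- if `A` is a closed KF-set of a `T₀` space such that `↓(A ∩ K)` is closed for
every compact saturated `K`, then `A` is directed in the specialization order. -/
theorem closed_KF_set_directed {X : Type*} [TopologicalSpace X] [T0Space X]
    (A : Set X) (hA : IsClosed A) (hKF : IsKFSet A)
    (h : ∀ K : Set X, IsCompact K → SatUpper K → IsClosed (SpecLower (A ∩ K))) :
    DirectedSubset A := by
  obtain ⟨hAne, 𝒦, h𝒦ne, hcs, hfil, hmeet, hmin⟩ := hKF
  have hclA : closure A = A := hA.closure_eq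
  -- `↓(A ∩ K)` is contained in `closure A` for any `K`.
  have hlow_sub : ∀ K : Set X, SpecLower (A ∩ K) ⊆ closure A := by
    intro K w hw
    rcases hw with ⟨a, ⟨haA, _⟩, hwa⟩
    exact closure_mono (Set.singleton_subset_iff.mpr haA) hwa
  -- Step 1: for every `K ∈ 𝒦`, `↓(A ∩ K) = A`.
  have step1 : ∀ K ∈ 𝒦, SpecLower (A ∩ K) = A := by
    intro K hK
    have hKc := (hcs K hK).1
    have hKs := (hcs K hK).2
    have hclosed := h K hKc hKs
    have hmeets : ∀ K' ∈ 𝒦, (SpecLower (A ∩ K) ∩ K').Nonempty := by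
      intro K' hK'
      rcases hfil K hK K' hK' with ⟨K₃, hK₃, hK₃sub⟩
      rcases hmeet K₃ hK₃ with ⟨p, hpA, hpK₃⟩
      rw [hclA] at hpA
      have hpK : p ∈ K := (hK₃sub hpK₃).1
      have hpK' : p ∈ K' := (hK₃sub hpK₃).2
      exact ⟨p, ⟨p, ⟨hpA, hpK⟩, specLE_refl p⟩, hpK'⟩
    have := hmin _ hclosed (hlow_sub K) hmeets
    rw [hclA] at this
    exact this
  -- Step 2: every `x ∈ A` has an element of `A ∩ K` above it, for every `K ∈ 𝒦`.
  have step2 : ∀ x ∈ A, ∀ K ∈ 𝒦, ∃ a, a ∈ A ∧ a ∈ K ∧ SpecLE x a := by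
    intro x hx K hK
    have : x ∈ SpecLower (A ∩ K) := by rw [step1 K hK]; exact hx
    rcases this with ⟨a, ⟨haA, haK⟩, hxa⟩
    exact ⟨a, haA, haK, hxa⟩
  refine ⟨hAne, fun x hx y hy => ?_⟩
  -- Step 3: apply the hypothesis to the compact saturated set `↑x`.
  set Ux : Set X := {z | SpecLE x z} with hUx
  have hclosed : IsClosed (SpecLower (A ∩ Ux)) := h Ux (isCompact_upSet x) (satUpper_upSet x)
  have hmeets : ∀ K ∈ 𝒦, (SpecLower (A ∩ Ux) ∩ K).Nonempty := by
    intro K hK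
    rcases step2 x hx K hK with ⟨a, haA, haK, hxa⟩
    exact ⟨a, ⟨a, ⟨haA, hxa⟩, specLE_refl a⟩, haK⟩
  have heq : SpecLower (A ∩ Ux) = A := by
    have := hmin _ hclosed (hlow_sub Ux) hmeets
    rw [hclA] at this
    exact this
  have hyC : y ∈ SpecLower (A ∩ Ux) := by rw [heq]; exact hy
  rcases hyC with ⟨z, ⟨hzA, hxz⟩, hyz⟩
  exact ⟨z, hzA, hxz, hyz⟩
end

section
/- Let X be a locally compact T0 space such that ↓(K ∩ A) is closed in X for every closed KF-set A of X and every compact saturated subset K of X. Then every irreducible closed subset of X is directed with respect to the specialization order (equivalently, every irreducible closed subset is the closure of a directed set; consequently the D-completion of X coincides with the sobrification of X). -/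
/-- An irreducible closed set. -/
def IrredClosed {X : Type*} [TopologicalSpace X] (A : Set X) : Prop :=
  IsClosed A ∧ A.Nonempty ∧
    ∀ B C : Set X, IsClosed B → IsClosed C → A ⊆ B ∪ C → A ⊆ B ∨ A ⊆ C

/-- Local compactness: every point of an open set has a compact saturated neighbourhood
inside the open set. -/
def LocallyCompactSat (X : Type*) [TopologicalSpace X] : Prop :=
  ∀ x : X, ∀ U : Set X, IsOpen U → x ∈ U →
    ∃ Q : Set X, IsCompact Q ∧ SatUpper Q ∧ x ∈ interior Q ∧ Q ⊆ U

/-- in a locally compact `T₀` space in which `↓(K ∩ A)` is closed for every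
closed KF-set `A` and compact saturated `K`, every irreducible closed set is directed. -/
theorem locally_compact_irred_directed {X : Type*} [TopologicalSpace X] [T0Space X]
    (hlc : LocallyCompactSat X)
    (h : ∀ A : Set X, IsClosed A → IsKFSet A →
      ∀ K : Set X, IsCompact K → SatUpper K → IsClosed (SpecLower (K ∩ A))) :
    ∀ A : Set X, IrredClosed A → DirectedSubset A := by
  intro A hA
  obtain ⟨hAc, hAne, hAirr⟩ := hA
  have hrefl : ∀ a : X, SpecLE a a := fun a => subset_closure rfl
  have htrans : ∀ {a b c : X}, SpecLE a b → SpecLE b c → SpecLE a c := by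
    intro a b c h1 h2
    exact closure_minimal (Set.singleton_subset_iff.mpr h2) isClosed_closure h1
  have hAlow : ∀ {z w : X}, z ∈ A → SpecLE w z → w ∈ A := by
    intro z w hz hw
    exact closure_minimal (Set.singleton_subset_iff.mpr hz) hAc hw
  -- the filtered family of compact saturated sets whose interiors meet `A`
  set 𝒦 : Set (Set X) := {Q | IsCompact Q ∧ SatUpper Q ∧ (interior Q ∩ A).Nonempty}
    with h𝒦
  have hmem : ∀ a ∈ A, ∃ Q ∈ 𝒦, a ∈ interior Q := by
    intro a ha
    obtain ⟨Q, hQc, hQs, haQ, _⟩ := hlc a Set.univ isOpen_univ (Set.mem_univ a)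
    exact ⟨Q, ⟨hQc, hQs, ⟨a, haQ, ha⟩⟩, haQ⟩
  have hKA : ∀ Q ∈ 𝒦, (A ∩ Q).Nonempty := by
    intro Q hQ
    obtain ⟨a, ha1, ha2⟩ := hQ.2.2
    exact ⟨a, ha2, interior_subset ha1⟩
  have hfil : FilteredFam 𝒦 := by
    intro Q₁ hQ₁ Q₂ hQ₂
    have hmeet : (A ∩ (interior Q₁ ∩ interior Q₂)).Nonempty := by
      by_contra hc
      rw [Set.not_nonempty_iff_eq_empty] at hc
      have hsub : A ⊆ (interior Q₁)ᶜ ∪ (interior Q₂)ᶜ := by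
        intro a ha
        by_contra hcc
        simp only [Set.mem_union, Set.mem_compl_iff, not_or, not_not] at hcc
        have : a ∈ A ∩ (interior Q₁ ∩ interior Q₂) := ⟨ha, hcc.1, hcc.2⟩
        rw [hc] at this
        exact this
      rcases hAirr _ _ (isOpen_interior.isClosed_compl) (isOpen_interior.isClosed_compl)
          hsub with h1 | h2
      · obtain ⟨a, ha1, ha2⟩ := hQ₁.2.2
        exact (h1 ha2) ha1
      · obtain ⟨a, ha1, ha2⟩ := hQ₂.2.2
        exact (h2 ha2) ha1
    obtain ⟨a, haA, haQ₁, haQ₂⟩ := hmeet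
    obtain ⟨Q₃, hQ₃c, hQ₃s, haQ₃, hQ₃sub⟩ :=
      hlc a (interior Q₁ ∩ interior Q₂) (isOpen_interior.inter isOpen_interior) ⟨haQ₁, haQ₂⟩
    refine ⟨Q₃, ⟨hQ₃c, hQ₃s, ⟨a, haQ₃, haA⟩⟩, fun z hz => ?_⟩
    exact ⟨interior_subset (hQ₃sub hz).1, interior_subset (hQ₃sub hz).2⟩
  -- `A` is a minimal closed set meeting every member of `𝒦`
  have hmin : ∀ C : Set X, IsClosed C → C ⊆ A → (∀ Q ∈ 𝒦, (C ∩ Q).Nonempty) → C = A := by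
    intro C hCc hCA hCK
    refine subset_antisymm hCA fun a ha => ?_
    by_contra hac
    obtain ⟨Q, hQc, hQs, haQ, hQU⟩ := hlc a Cᶜ hCc.isOpen_compl hac
    have hQ𝒦 : Q ∈ 𝒦 := ⟨hQc, hQs, ⟨a, haQ, ha⟩⟩
    obtain ⟨c, hc1, hc2⟩ := hCK Q hQ𝒦
    exact (hQU hc2) hc1
  -- hence `A` is a closed KF-set
  have hKF : IsKFSet A := by
    refine ⟨hAne, 𝒦, ?_, fun Q hQ => ⟨hQ.1, hQ.2.1⟩, hfil, ?_, ?_⟩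
    · obtain ⟨a, ha⟩ := hAne
      obtain ⟨Q, hQ, _⟩ := hmem a ha
      exact ⟨Q, hQ⟩
    · intro Q hQ
      rw [hAc.closure_eq]
      exact hKA Q hQ
    · intro C hCc hCA hCK
      rw [hAc.closure_eq] at hCA ⊢
      exact hmin C hCc hCA hCK
  have hdc := h A hAc hKF
  -- `↓(Q ∩ A) = A` for every `Q ∈ 𝒦`
  have hdown : ∀ Q ∈ 𝒦, SpecLower (Q ∩ A) = A := by
    intro Q hQ
    refine hmin _ (hdc Q hQ.1 hQ.2.1) ?_ ?_
    · rintro w ⟨a, ⟨_, haA⟩, hwa⟩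
      exact hAlow haA hwa
    · intro K hK
      obtain ⟨Q₃, hQ₃, hsub⟩ := hfil Q hQ K hK
      obtain ⟨a, haA, haQ₃⟩ := hKA Q₃ hQ₃
      exact ⟨a, ⟨a, ⟨(hsub haQ₃).1, haA⟩, hrefl a⟩, (hsub haQ₃).2⟩
  -- `↑x` is compact saturated
  have hupC : ∀ x : X, IsCompact {z | SpecLE x z} := by
    intro x
    refine isCompact_of_finite_subcover ?_
    intro ι U hU hcov
    obtain ⟨i, hi⟩ := Set.mem_iUnion.mp (hcov (hrefl x))
    refine ⟨{i}, fun z hz => ?_⟩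
    simp only [Finset.mem_singleton, Set.mem_iUnion, exists_prop]
    obtain ⟨w, hw1, hw2⟩ := mem_closure_iff.mp hz (U i) (hU i) hi
    rcases hw2 with rfl
    exact ⟨i, rfl, hw1⟩
  have hupS : ∀ x : X, SatUpper {z | SpecLE x z} := by
    intro x z hz w hw
    exact htrans hz hw
  -- the directedness
  refine ⟨hAne, fun x hx y hy => ?_⟩
  have hBc : IsClosed (SpecLower ({z | SpecLE x z} ∩ A)) := hdc _ (hupC x) (hupS x)
  have hBA : SpecLower ({z | SpecLE x z} ∩ A) = A := by
    refine hmin _ hBc ?_ ?_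
    · rintro w ⟨a, ⟨_, haA⟩, hwa⟩
      exact hAlow haA hwa
    · intro Q hQ
      have hxQ : x ∈ SpecLower (Q ∩ A) := (hdown Q hQ).symm ▸ hx
      obtain ⟨a, ⟨haQ, haA⟩, hxa⟩ := hxQ
      exact ⟨a, ⟨a, ⟨hxa, haA⟩, hrefl a⟩, haQ⟩
  have hyB : y ∈ SpecLower ({z | SpecLE x z} ∩ A) := hBA.symm ▸ hy
  obtain ⟨z, ⟨hxz, hzA⟩, hyz⟩ := hyB
  exact ⟨z, hzA, hxz, hyz⟩
end

section
/- Let L be a core-compact and join-continuous poset. Then every irreducible Scott-closed subset of L is directed (consequently the D-completion of L coincides with the sobrification of L). -/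
/-- A Scott-open subset of a preorder: an upper set that meets every directed set whose
supremum exists and lies in it. -/
def ScottOpen {P : Type*} [Preorder P] (U : Set P) : Prop :=
  IsUpperSet U ∧ ∀ D : Set P, D.Nonempty → DirectedOn (· ≤ ·) D →
    ∀ a : P, IsLUB D a → a ∈ U → (D ∩ U).Nonempty

/-- A Scott-closed subset of a preorder: a lower set closed under suprema of directed
subsets that exist. -/
def ScottClosed {P : Type*} [Preorder P] (A : Set P) : Prop :=
  IsLowerSet A ∧ ∀ D ⊆ A, D.Nonempty → DirectedOn (· ≤ ·) D →
    ∀ a : P, IsLUB D a → a ∈ A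

/-- The Scott topology on a preorder. -/
def scottTop (P : Type*) [Preorder P] : TopologicalSpace P where
  IsOpen := ScottOpen
  isOpen_univ :=
    ⟨isUpperSet_univ, fun D hD _ _ _ _ => hD.imp fun d hd => ⟨hd, trivial⟩⟩
  isOpen_inter := fun U V hU hV =>
    ⟨hU.1.inter hV.1, fun D hD hdir a ha haUV => by
      obtain ⟨d₁, hd₁D, hd₁U⟩ := hU.2 D hD hdir a ha haUV.1
      obtain ⟨d₂, hd₂D, hd₂V⟩ := hV.2 D hD hdir a ha haUV.2
      obtain ⟨d₃, hd₃D, h₁₃, h₂₃⟩ := hdir d₁ hd₁D d₂ hd₂D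
      exact ⟨d₃, hd₃D, hU.1 h₁₃ hd₁U, hV.1 h₂₃ hd₂V⟩⟩
  isOpen_sUnion := fun S hS =>
    ⟨isUpperSet_sUnion fun U hU => (hS U hU).1, fun D hD hdir a ha haU => by
      obtain ⟨U, hUS, haU'⟩ := haU
      obtain ⟨d, hdD, hdU⟩ := (hS U hUS).2 D hD hdir a ha haU'
      exact ⟨d, hdD, U, hUS, hdU⟩⟩

/-- The way-below relation between Scott-open sets, in the complete lattice `σ(L)` of
Scott-open sets ordered by inclusion (in which the supremum of any family is its union):
`U ≪ V` iff every directed family of Scott-open sets whose union contains `V` has a member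
containing `U`. -/
def OpenWayBelow (L : Type*) [Preorder L] (U V : Set L) : Prop :=
  ∀ 𝒟 : Set (Set L), (∀ W ∈ 𝒟, ScottOpen W) → 𝒟.Nonempty → DirectedOn (· ⊆ ·) 𝒟 →
    V ⊆ ⋃₀ 𝒟 → ∃ W ∈ 𝒟, U ⊆ W

/-- `σ(L)` is a continuous lattice: every Scott-open set is the union (= supremum in
`σ(L)`) of the Scott-open sets way below it. -/
def SigmaContinuous (L : Type*) [Preorder L] : Prop :=
  ∀ V : Set L, ScottOpen V →
    V = ⋃₀ {U : Set L | ScottOpen U ∧ OpenWayBelow L U V}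

/-- A poset is join-continuous if for every `x` and every Scott-open `U`,
the set `{y | ↑x ∩ ↑y ⊆ U}` is Scott-open. -/
def JoinContinuous (L : Type*) [Preorder L] : Prop :=
  ∀ x : L, ∀ U : Set L, ScottOpen U → ScottOpen {y : L | Set.Ici x ∩ Set.Ici y ⊆ U}

section Aux
variable {L : Type*} [PartialOrder L]

lemma scottOpen_compl {A : Set L} (hA : ScottClosed A) : ScottOpen Aᶜ := by
  constructor
  · intro a b hab ha hb
    exact ha (hA.1 hab hb)
  · intro D hD hdir a ha haU
    by_contra hcon
    refine haU (hA.2 D (fun d hd => ?_) hD hdir a ha)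
    by_contra hdA
    exact hcon ⟨d, hd, hdA⟩

lemma scottClosed_compl {O : Set L} (hO : ScottOpen O) : ScottClosed Oᶜ := by
  constructor
  · intro a b hab ha hb
    exact ha (hO.1 hab hb)
  · intro D hDsub hD hdir a ha haO
    obtain ⟨d, hdD, hdO⟩ := hO.2 D hD hdir a ha haO
    exact hDsub hdD hdO

lemma scottOpen_empty : ScottOpen (∅ : Set L) :=
  ⟨fun _ _ _ h => h, fun _ _ _ _ _ h => absurd h (Set.notMem_empty _)⟩

lemma scottOpen_union {O₁ O₂ : Set L} (h₁ : ScottOpen O₁) (h₂ : ScottOpen O₂) :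
    ScottOpen (O₁ ∪ O₂) := by
  refine ⟨h₁.1.union h₂.1, fun D hD hdir a ha haU => ?_⟩
  rcases haU with haU | haU
  · obtain ⟨d, hdD, hdO⟩ := h₁.2 D hD hdir a ha haU
    exact ⟨d, hdD, Or.inl hdO⟩
  · obtain ⟨d, hdD, hdO⟩ := h₂.2 D hD hdir a ha haU
    exact ⟨d, hdD, Or.inr hdO⟩

lemma wb_sub {P Q : Set L} (hQ : ScottOpen Q) (h : OpenWayBelow L P Q) : P ⊆ Q := by
  obtain ⟨W, hW, hPW⟩ := h {Q} (by rintro W rfl; exact hQ) ⟨Q, rfl⟩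
    (by haveI : Std.Refl (fun x1 x2 : Set L => x1 ⊆ x2) := ⟨fun _ => subset_rfl⟩; exact directedOn_singleton Q)
    (fun q hq => ⟨Q, rfl, hq⟩)
  rw [Set.mem_singleton_iff] at hW
  subst hW
  exact hPW

lemma wb_mono_right {P Q Q' : Set L} (h : OpenWayBelow L P Q) (hq : Q ⊆ Q') :
    OpenWayBelow L P Q' :=
  fun 𝒟 ho hne hdir hcov => h 𝒟 ho hne hdir (hq.trans hcov)

lemma wb_mono_left {P P' Q : Set L} (hp : P' ⊆ P) (h : OpenWayBelow L P Q) :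
    OpenWayBelow L P' Q := by
  intro 𝒟 ho hne hdir hcov
  obtain ⟨W, hW, hs⟩ := h 𝒟 ho hne hdir hcov
  exact ⟨W, hW, hp.trans hs⟩

lemma wb_union {P₁ P₂ Q : Set L} (h₁ : OpenWayBelow L P₁ Q) (h₂ : OpenWayBelow L P₂ Q) :
    OpenWayBelow L (P₁ ∪ P₂) Q := by
  intro 𝒟 ho hne hdir hcov
  obtain ⟨W₁, hW₁, hs₁⟩ := h₁ 𝒟 ho hne hdir hcov
  obtain ⟨W₂, hW₂, hs₂⟩ := h₂ 𝒟 ho hne hdir hcov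
  obtain ⟨W₃, hW₃, h13, h23⟩ := hdir W₁ hW₁ W₂ hW₂
  exact ⟨W₃, hW₃, Set.union_subset (hs₁.trans h13) (hs₂.trans h23)⟩

lemma wb_empty {Q : Set L} : OpenWayBelow L (∅ : Set L) Q :=
  fun _ _ hne _ _ => hne.imp fun W hW => ⟨hW, Set.empty_subset W⟩

lemma exists_wb {Q : Set L} (hcc : SigmaContinuous L) (hQ : ScottOpen Q) {q : L}
    (hq : q ∈ Q) : ∃ W, ScottOpen W ∧ OpenWayBelow L W Q ∧ q ∈ W := by
  rw [hcc Q hQ] at hq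
  obtain ⟨W, ⟨hW1, hW2⟩, hqW⟩ := hq
  exact ⟨W, hW1, hW2, hqW⟩

end Aux
/-- in a core-compact join-continuous poset, every irreducible Scott-closed
set is directed. -/
theorem core_compact_join_continuous_irred_directed (L : Type*) [PartialOrder L]
    (hcc : SigmaContinuous L) (hjc : JoinContinuous L) :
    ∀ A : Set L, ScottClosed A → A.Nonempty →
      (∀ B C : Set L, ScottClosed B → ScottClosed C → A ⊆ B ∪ C → A ⊆ B ∨ A ⊆ C) →
      ∀ x ∈ A, ∀ y ∈ A, ∃ z ∈ A, x ≤ z ∧ y ≤ z := by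
  intro A hA _hAne hirr x hx y hy
  by_contra hcon
  push_neg at hcon
  have hU : ScottOpen Aᶜ := scottOpen_compl hA
  -- the family V w
  set V : L → Set L := fun w => {u : L | Set.Ici w ∩ Set.Ici u ⊆ Aᶜ} with hV
  have hVopen : ∀ w, ScottOpen (V w) := fun w => hjc w Aᶜ hU
  have hVmono : ∀ {w w' : L}, w ≤ w' → V w ⊆ V w' := by
    intro w w' hww' u hu t ht
    exact hu ⟨hww'.trans ht.1, ht.2⟩
  have hVsymm : ∀ {w u : L}, u ∈ V w → w ∈ V u := by
    intro w u hu t ht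
    exact hu ⟨ht.2, ht.1⟩
  -- V turns existing directed sups into unions
  have hVsup : ∀ D : Set L, D.Nonempty → DirectedOn (· ≤ ·) D → ∀ a : L, IsLUB D a →
      ∀ u ∈ V a, ∃ d ∈ D, u ∈ V d := by
    intro D hD hdir a ha u hu
    have hS : ScottOpen {t : L | Set.Ici u ∩ Set.Ici t ⊆ Aᶜ} := hjc u Aᶜ hU
    obtain ⟨d, hdD, hdS⟩ := hS.2 D hD hdir a ha (hVsymm hu)
    exact ⟨d, hdD, hVsymm hdS⟩
  -- y ∈ V x since x, y have no common upper bound in A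
  have hyVx : y ∈ V x := by
    intro t ht htA
    exact hcon t htA ht.1 ht.2
  obtain ⟨W, hWo, hWwb, hyW⟩ := exists_wb hcc (hVopen x) hyVx
  obtain ⟨N, hNo, hNwb, hyN⟩ := exists_wb hcc hWo hyW
  -- the auxiliary Scott-open set M
  set M : Set L := {w : L | ∃ W', ScottOpen W' ∧ OpenWayBelow L N W' ∧
    OpenWayBelow L W' (V w)} with hM
  have hMopen : ScottOpen M := by
    constructor
    · intro w w' hww' hw
      obtain ⟨W', h1, h2, h3⟩ := hw
      exact ⟨W', h1, h2, wb_mono_right h3 (hVmono hww')⟩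
    · intro D hDne hdir a hlub haM
      obtain ⟨W', hW'o, hNW', hW'V⟩ := haM
      set G : Set (Set L) := {O : Set L | ScottOpen O ∧ ∃ d ∈ D, OpenWayBelow L O (V d)}
        with hG
      have hGo : ∀ O ∈ G, ScottOpen O := fun O hO => hO.1
      have hGne : G.Nonempty := by
        obtain ⟨d, hd⟩ := hDne
        exact ⟨∅, scottOpen_empty, d, hd, wb_empty⟩
      have hGdir : DirectedOn (· ⊆ ·) G := by
        rintro O₁ ⟨hO₁, d₁, hd₁, hwb₁⟩ O₂ ⟨hO₂, d₂, hd₂, hwb₂⟩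
        obtain ⟨d₃, hd₃, h13, h23⟩ := hdir d₁ hd₁ d₂ hd₂
        exact ⟨O₁ ∪ O₂, ⟨scottOpen_union hO₁ hO₂, d₃, hd₃,
          wb_union (wb_mono_right hwb₁ (hVmono h13)) (wb_mono_right hwb₂ (hVmono h23))⟩,
          Set.subset_union_left, Set.subset_union_right⟩
      have hcov : V a ⊆ ⋃₀ G := by
        intro u hu
        obtain ⟨d, hdD, hud⟩ := hVsup D hDne hdir a hlub u hu
        obtain ⟨O, hOo, hOwb, huO⟩ := exists_wb hcc (hVopen d) hud
        exact ⟨O, ⟨hOo, d, hdD, hOwb⟩, huO⟩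
      obtain ⟨O, ⟨hOo, d, hdD, hOwb⟩, hW'O⟩ := hW'V G hGo hGne hGdir hcov
      exact ⟨d, hdD, O, hOo, wb_mono_right hNW' hW'O, hOwb⟩
  have hxM : x ∈ M := ⟨W, hWo, hNwb, hWwb⟩
  -- irreducibility: A meets M ∩ N
  by_cases hb : (A ∩ (M ∩ N)).Nonempty
  · obtain ⟨b, hbA, ⟨W', hW'o, hNW', hW'V⟩, hbN⟩ := hb
    have h1 : N ⊆ W' := wb_sub hW'o hNW'
    have h2 : W' ⊆ V b := wb_sub (hVopen b) hW'V
    exact (h2 (h1 hbN)) ⟨le_refl b, le_refl b⟩ hbA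
  · have hsub : A ⊆ Mᶜ ∪ Nᶜ := by
      intro a ha
      by_cases hm : a ∈ M
      · by_cases hn : a ∈ N
        · exact absurd ⟨a, ha, hm, hn⟩ hb
        · exact Or.inr hn
      · exact Or.inl hm
    rcases hirr _ _ (scottClosed_compl hMopen) (scottClosed_compl hNo) hsub with h' | h'
    · exact h' hx hxM
    · exact h' hy hyN
end

section
/- Let X be a second countable T0 space. Then every irreducible closed subset of X is a well-filtered determined (WD) set (equivalently, the well-filterification of X coincides with the sobrification of X). -/
/-- A well-filtered space: for every nonempty filtered family of compact saturated sets and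
every open set containing its intersection, some member of the family is contained in the
open set. -/
def WellFiltered (Y : Type*) [TopologicalSpace Y] : Prop :=
  ∀ 𝒦 : Set (Set Y), 𝒦.Nonempty → (∀ K ∈ 𝒦, IsCompact K ∧ SatUpper K) → FilteredFam 𝒦 →
    ∀ U : Set Y, IsOpen U → ⋂₀ 𝒦 ⊆ U → ∃ K ∈ 𝒦, K ⊆ U

/-- A well-filtered determined (WD) subset of `X`: every continuous map to a well-filtered
`T₀` space sends it to the closure of a unique point. -/
def IsWDSet {X : Type*} [TopologicalSpace X] (A : Set X) : Prop :=
  ∀ (Y : Type*) [TopologicalSpace Y] [T0Space Y], WellFiltered Y →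
    ∀ f : X → Y, Continuous f → ∃ y : Y, closure (f '' A) = closure ({y} : Set Y)

/-!
An irreducible set `A` in a second countable space carries a sequence `x` in `A` converging to
every point of `A`: in the subspace `A`, any finitely many nonempty basic open sets meet, so they
generate a proper, countably generated filter, which lies below every neighbourhood filter.
The upper closures of the tails of `f ∘ x` are compact (each tail converges to its own first term)
and decrease, and all of them meet `cl (f A)`. Well-filteredness of `Y` yields a point `y` of
`cl (f A)` lying in all of them; as `f ∘ x` converges to every `f a` with `a ∈ A`, each such `f a`
lies in `cl {y}`.
-/

open Set Filter Topology TopologicalSpace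

lemma IrredClosed.isIrreducible {X : Type*} [TopologicalSpace X] {A : Set X}
    (hA : IrredClosed A) : IsIrreducible A :=
  ⟨hA.2.1, isPreirreducible_iff_isClosed_union_isClosed.2 hA.2.2⟩

-- `SpecLE x y` is `y ⤳ x`, so `nhdsKer s` is the upper closure of `s` in the specialization order.
lemma satUpper_nhdsKer {X : Type*} [TopologicalSpace X] (s : Set X) : SatUpper (nhdsKer s) :=
  fun _ hx _ hxy ↦ nhdsKer_nhdsKer s ▸
    mem_nhdsKer_iff_specializes.2 ⟨_, hx, specializes_iff_mem_closure.2 hxy⟩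

lemma filteredFam_range_of_antitone {X ι : Type*} [Preorder ι] [IsDirected ι (· ≤ ·)]
    {K : ι → Set X} (hK : Antitone K) : FilteredFam (range K) := by
  rintro _ ⟨i, rfl⟩ _ ⟨j, rfl⟩
  obtain ⟨k, hik, hjk⟩ := directed_of (· ≤ ·) i j
  exact ⟨K k, mem_range_self k, subset_inter (hK hik) (hK hjk)⟩

lemma WellFiltered.sInter_inter_nonempty {Y : Type*} [TopologicalSpace Y] (hY : WellFiltered Y)
    {𝒦 : Set (Set Y)} (hne : 𝒦.Nonempty) (hK : ∀ K ∈ 𝒦, IsCompact K ∧ SatUpper K)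
    (hfil : FilteredFam 𝒦) {C : Set Y} (hC : IsClosed C) (hmeet : ∀ K ∈ 𝒦, (K ∩ C).Nonempty) :
    (⋂₀ 𝒦 ∩ C).Nonempty := by
  by_contra h
  obtain ⟨K, hK𝒦, hKC⟩ := hY 𝒦 hne hK hfil Cᶜ hC.isOpen_compl
    fun y hy hyC ↦ h ⟨y, hy, hyC⟩
  obtain ⟨y, hyK, hyC⟩ := hmeet K hK𝒦
  exact hKC hyK hyC

lemma IrreducibleSpace.exists_seq_tendsto_nhds (Z : Type*) [TopologicalSpace Z]
    [IrreducibleSpace Z] [SecondCountableTopology Z] :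
    ∃ x : ℕ → Z, ∀ z, Tendsto x atTop (𝓝 z) := by
  obtain ⟨b, hbc, hb_empty, hb⟩ := exists_countable_basis Z
  have : (generate b).IsCountablyGenerated := ⟨⟨b, hbc, rfl⟩⟩
  have hb_nonempty : ∀ u ∈ b, u.Nonempty :=
    fun u hu ↦ nonempty_iff_ne_empty.2 fun h ↦ hb_empty (h ▸ hu)
  have : (generate b).NeBot := generate_neBot_iff.2 fun t htb ht ↦ by
    simpa using isIrreducible_iff_sInter.1 (IrreducibleSpace.isIrreducible_univ Z) ht.toFinset
      (fun u hu ↦ hb.isOpen (htb (ht.mem_toFinset.1 hu)))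
      (fun u hu ↦ by simpa using hb_nonempty u (htb (ht.mem_toFinset.1 hu)))
  have hb_le_nhds : ∀ z, generate b ≤ 𝓝 z :=
    fun z ↦ hb.nhds_hasBasis.ge_iff.2 fun t ht ↦ mem_generate_of_mem ht.1
  obtain ⟨x, hx⟩ := (generate b).exists_seq_tendsto
  exact ⟨x, fun z ↦ hx.mono_right (hb_le_nhds z)⟩

lemma IsIrreducible.exists_seq_tendsto_nhds {X : Type*} [TopologicalSpace X]
    [SecondCountableTopology X] {A : Set X} (hA : IsIrreducible A) :
    ∃ x : ℕ → X, (∀ n, x n ∈ A) ∧ ∀ a ∈ A, Tendsto x atTop (𝓝 a) := by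
  have := Subtype.irreducibleSpace hA
  obtain ⟨x, hx⟩ := IrreducibleSpace.exists_seq_tendsto_nhds A
  exact ⟨fun n ↦ x n, fun n ↦ (x n).2,
    fun a ha ↦ (continuous_subtype_val.tendsto ⟨a, ha⟩).comp (hx ⟨a, ha⟩)⟩

lemma isCompact_range_add_of_tendsto {Y : Type*} [TopologicalSpace Y] {v : ℕ → Y} {n : ℕ}
    (hv : Tendsto v atTop (𝓝 (v n))) : IsCompact (range fun m ↦ v (m + n)) := by
  have := ((tendsto_add_atTop_iff_nat n).2 hv).isCompact_insert_range
  rwa [insert_eq_of_mem (mem_range.2 ⟨0, by simp⟩)] at this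

lemma WellFiltered.exists_specializes_of_tendsto {Y : Type*} [TopologicalSpace Y]
    (hY : WellFiltered Y) {C : Set Y} (hC : IsClosed C) {v : ℕ → Y} (hvC : ∀ n, v n ∈ C)
    (hv : ∀ n, Tendsto v atTop (𝓝 (v n))) :
    ∃ y ∈ C, ∀ b, Tendsto v atTop (𝓝 b) → y ⤳ b := by
  set K : ℕ → Set Y := fun n ↦ nhdsKer (range fun m ↦ v (m + n))
  have hK_anti : Antitone K := fun n n' hnn' ↦ nhdsKer_mono <| by
    rintro _ ⟨m, rfl⟩
    exact ⟨m + (n' - n), by simp only [add_assoc, Nat.sub_add_cancel hnn']⟩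
  have hK_compact : ∀ n, IsCompact (K n) :=
    fun n ↦ IsCompact.nhdsKer_iff.2 (isCompact_range_add_of_tendsto (hv n))
  have hK_meet : ∀ n, (K n ∩ C).Nonempty :=
    fun n ↦ ⟨v n, subset_nhdsKer ⟨0, by simp⟩, hvC n⟩
  obtain ⟨y, hyK, hyC⟩ := hY.sInter_inter_nonempty (range_nonempty K)
    (forall_mem_range.2 fun n ↦ ⟨hK_compact n, satUpper_nhdsKer _⟩)
    (filteredFam_range_of_antitone hK_anti) hC (forall_mem_range.2 hK_meet)
  refine ⟨y, hyC, fun b hb ↦ specializes_iff_forall_open.2 fun U hU hbU ↦ ?_⟩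
  obtain ⟨N, hN⟩ := eventually_atTop.1 (hb.eventually (hU.mem_nhds hbU))
  exact (hU.nhdsKer_subset.2 (range_subset_iff.2 fun m ↦ hN _ (Nat.le_add_left N m)))
    (hyK _ (mem_range_self N))

theorem second_countable_irred_WD_general {X : Type*} [TopologicalSpace X]
    [SecondCountableTopology X] :
    ∀ A : Set X, IrredClosed A → IsWDSet A := by
  intro A hA Y _ _ hY f hf
  obtain ⟨x, hxA, hx⟩ := hA.isIrreducible.exists_seq_tendsto_nhds
  have hfx : ∀ a ∈ A, Tendsto (f ∘ x) atTop (𝓝 (f a)) :=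
    fun a ha ↦ (hf.tendsto a).comp (hx a ha)
  obtain ⟨y, hy_mem, hy_spec⟩ := hY.exists_specializes_of_tendsto isClosed_closure
    (fun n ↦ subset_closure (mem_image_of_mem f (hxA n))) (fun n ↦ hfx _ (hxA n))
  refine ⟨y, subset_antisymm (closure_minimal ?_ isClosed_closure)
    (closure_minimal (singleton_subset_iff.2 hy_mem) isClosed_closure)⟩
  rintro _ ⟨a, ha, rfl⟩
  exact specializes_iff_mem_closure.1 (hy_spec _ (hfx a ha))

/-- in a second countable `T₀` space, every irreducible closed set is a
well-filtered determined set. -/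
theorem second_countable_irred_WD {X : Type*} [TopologicalSpace X] [T0Space X]
    [SecondCountableTopology X] :
    ∀ A : Set X, IrredClosed A → IsWDSet A :=
  second_countable_irred_WD_general
end

section
/- Let X be a T0 space such that ↓(A ∩ W) is closed in X for every irreducible closed subset A of X and every upper set W of X (with respect to the specialization order). Then every irreducible closed subset of X is directed with respect to the specialization order (consequently the D-completion of X coincides with the sobrification of X). -/
/-- if `↓(A ∩ W)` is closed for every irreducible closed `A` and every upper
set `W` (w.r.t. the specialization order), then every irreducible closed set is directed. -/
theorem lower_inter_upper_closed_irred_directed {X : Type*} [TopologicalSpace X] [T0Space X]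
    (h : ∀ A : Set X, IrredClosed A → ∀ W : Set X, SatUpper W →
      IsClosed (SpecLower (A ∩ W))) :
    ∀ A : Set X, IrredClosed A → DirectedSubset A := by
  intro A hA
  obtain ⟨hAc, hAne, hirr⟩ := hA
  refine ⟨hAne, ?_⟩
  intro x hx y hy
  have hrefl : ∀ z : X, SpecLE z z := fun z => subset_closure rfl
  have htrans : ∀ a b c : X, SpecLE a b → SpecLE b c → SpecLE a c := by
    intro a b c hab hbc
    exact closure_minimal (Set.singleton_subset_iff.mpr hbc) isClosed_closure hab
  set W : Set X := {z | SpecLE x z} with hW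
  have hWup : SatUpper W := fun a ha b hab => htrans _ _ _ ha hab
  set B := SpecLower (A ∩ W) with hB
  have hBclosed : IsClosed B := h A ⟨hAc, hAne, hirr⟩ W hWup
  have hBlower : ∀ a ∈ B, ∀ b, SpecLE b a → b ∈ B := by
    rintro a ⟨c, hc, hac⟩ b hba; exact ⟨c, hc, htrans _ _ _ hba hac⟩
  have hCup : SatUpper Bᶜ := fun a ha b hab hbB => ha (hBlower b hbB a hab)
  set C := SpecLower (A ∩ Bᶜ) with hC
  have hCclosed : IsClosed C := h A ⟨hAc, hAne, hirr⟩ Bᶜ hCup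
  have hsub : A ⊆ B ∪ C := by
    intro a ha
    by_cases hab : a ∈ B
    · exact Or.inl hab
    · exact Or.inr ⟨a, ⟨ha, hab⟩, hrefl a⟩
  rcases hirr B C hBclosed hCclosed hsub with hAB | hAC
  · obtain ⟨z, ⟨hzA, hzW⟩, hyz⟩ := hAB hy
    exact ⟨z, hzA, hzW, hyz⟩
  · obtain ⟨z, ⟨hzA, hzB⟩, hxz⟩ := hAC hx
    exact absurd (⟨z, ⟨hzA, hxz⟩, hrefl z⟩ : z ∈ B) hzB
end

section
/- Let L = ℕ × ℕ × (ℕ ∪ {∞}) with the partial order: (n₁,i₁,j₁) ≤ (n₂,i₂,j₂) iff either (a) n₁ = n₂, i₁ = i₂ and j₁ ≤ j₂, or (b) n₁ = n₂, j₁ = i₂ = j₂ and i₁ ≤ i₂, or (c) n₂ = n₁ + 1, j₂ = ∞ and j₁ ≤ i₂. Then there is no directed subset D of L whose Scott-closure equals L. -/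
/-- The example poset `L = ℕ × ℕ × (ℕ ∪ {∞})`. -/
abbrev MiaoL : Type := ℕ × ℕ × WithTop ℕ

/-- The order on `L`: `(n₁,i₁,j₁) ≤ (n₂,i₂,j₂)` iff
(a) `n₁ = n₂`, `i₁ = i₂` and `j₁ ≤ j₂`, or
(b) `n₁ = n₂`, `j₁ = i₂ = j₂` and `i₁ ≤ i₂`, or
(c) `n₂ = n₁ + 1`, `j₂ = ∞` and `j₁ ≤ i₂`. -/
def lleL (p q : MiaoL) : Prop :=
  (p.1 = q.1 ∧ p.2.1 = q.2.1 ∧ p.2.2 ≤ q.2.2) ∨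
  (p.1 = q.1 ∧ p.2.2 = (q.2.1 : WithTop ℕ) ∧ q.2.2 = (q.2.1 : WithTop ℕ) ∧ p.2.1 ≤ q.2.1) ∨
  (q.1 = p.1 + 1 ∧ q.2.2 = (⊤ : WithTop ℕ) ∧ p.2.2 ≤ (q.2.1 : WithTop ℕ))

/-- Directed subset with respect to a relation `r`. -/
def RDir {α : Type*} (r : α → α → Prop) (D : Set α) : Prop :=
  D.Nonempty ∧ ∀ x ∈ D, ∀ y ∈ D, ∃ z ∈ D, r x z ∧ r y z

/-- `s` is an upper bound of `D` with respect to `r`. -/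
def RUB {α : Type*} (r : α → α → Prop) (D : Set α) (s : α) : Prop := ∀ d ∈ D, r d s

/-- `s` is the least upper bound (supremum) of `D` with respect to `r`. -/
def RLUB {α : Type*} (r : α → α → Prop) (D : Set α) (s : α) : Prop :=
  RUB r D s ∧ ∀ t : α, RUB r D t → r s t

/-- Scott-open set with respect to a relation `r`: an upper set meeting every directed set
whose supremum exists and lies in it. -/
def RScottOpen {α : Type*} (r : α → α → Prop) (U : Set α) : Prop :=
  (∀ x ∈ U, ∀ y, r x y → y ∈ U) ∧
  ∀ D : Set α, RDir r D → ∀ s : α, RLUB r D s → s ∈ U → (D ∩ U).Nonempty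

/-- Closed set in the Scott topology: complement of a Scott-open set. -/
def RScottClosed {α : Type*} (r : α → α → Prop) (C : Set α) : Prop := RScottOpen r Cᶜ

/-- Closure in the Scott topology. -/
def RClosure {α : Type*} (r : α → α → Prop) (A : Set α) : Set α :=
  ⋂₀ {C : Set α | RScottClosed r C ∧ A ⊆ C}

/-- Compactness in the Scott topology: every cover by Scott-open sets has a finite
subcover. -/
def RCompact {α : Type*} (r : α → α → Prop) (K : Set α) : Prop :=
  ∀ 𝒰 : Set (Set α), (∀ U ∈ 𝒰, RScottOpen r U) → K ⊆ ⋃₀ 𝒰 →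
    ∃ 𝒱 ⊆ 𝒰, 𝒱.Finite ∧ K ⊆ ⋃₀ 𝒱

/-- Saturated set: an upper set with respect to `r`. -/
def RSat {α : Type*} (r : α → α → Prop) (K : Set α) : Prop :=
  ∀ x ∈ K, ∀ y, r x y → y ∈ K

/-!
The level `p.1` of a point can rise by at most one along `lleL`, so a directed set lives in
levels `≤ N` for some `N`, and it suffices that `{p | p.1 ≤ N}` is Scott-closed. It is a lower
set, and no set below level `n` has a supremum `s` at level `n`: such an `s` has the form
`(n, a, ∞)`, and `(n, a + 1, ∞)` is another upper bound incomparable with it.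
-/

lemma lleL_fst_bounds {p q : MiaoL} (h : lleL p q) : p.1 ≤ q.1 ∧ q.1 ≤ p.1 + 1 := by
  rcases h with ⟨h, -⟩ | ⟨h, -⟩ | ⟨h, -⟩ <;> omega

lemma not_rLUB_of_forall_fst_lt {E : Set MiaoL} {s : MiaoL} (hE : ∀ e ∈ E, e.1 < s.1) :
    ¬ RLUB lleL E s := by
  rintro ⟨hub, hleast⟩
  let t : MiaoL := (s.1, s.2.1 + 1, ⊤)
  have ht : RUB lleL E t := by
    intro e he
    have hlt := hE e he
    rcases hub e he with ⟨h, -⟩ | ⟨h, -⟩ | ⟨hs1, -, hes⟩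
    · omega
    · omega
    · exact Or.inr (Or.inr ⟨hs1, rfl, hes.trans (WithTop.coe_le_coe.2 (Nat.le_succ _))⟩)
  rcases hleast t ht with ⟨-, h, -⟩ | ⟨-, -, h, -⟩ | ⟨h, -⟩
  · exact Nat.succ_ne_self _ h.symm
  · exact WithTop.top_ne_coe h
  · exact Nat.succ_ne_self s.1 h.symm

lemma rScottClosed_fst_le (N : ℕ) : RScottClosed lleL {p : MiaoL | p.1 ≤ N} := by
  refine ⟨fun x hx y hxy hy => hx ((lleL_fst_bounds hxy).1.trans hy), fun E _ s hs hsN => ?_⟩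
  refine by_contra fun hEN => not_rLUB_of_forall_fst_lt (fun e he => ?_) hs
  have heN : e.1 ≤ N := by_contra fun h => hEN ⟨e, he, h⟩
  exact heN.trans_lt (not_le.1 hsN)

lemma rClosure_subset {α : Type*} {r : α → α → Prop} {A C : Set α} (hC : RScottClosed r C)
    (hAC : A ⊆ C) : RClosure r A ⊆ C :=
  Set.sInter_subset_of_mem ⟨hC, hAC⟩

lemma RDir.fst_le_fst_add_one {D : Set MiaoL} (hD : RDir lleL D) {a b : MiaoL} (ha : a ∈ D)
    (hb : b ∈ D) : b.1 ≤ a.1 + 1 := by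
  obtain ⟨z, -, haz, hbz⟩ := hD.2 a ha b hb
  have := lleL_fst_bounds haz
  have := lleL_fst_bounds hbz
  omega

/-- there is no directed subset of `L` whose Scott-closure is all of `L`. -/
theorem no_directed_dense_subset :
    ¬ ∃ D : Set MiaoL, RDir lleL D ∧ RClosure lleL D = Set.univ := by
  rintro ⟨D, hD, hcl⟩
  obtain ⟨d, hd⟩ := hD.1
  have hDN : D ⊆ {p : MiaoL | p.1 ≤ d.1 + 1} := fun b hb => hD.fst_le_fst_add_one hd hb
  have hfar : ((d.1 + 2, 0, 0) : MiaoL) ∈ {p : MiaoL | p.1 ≤ d.1 + 1} :=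
    rClosure_subset (rScottClosed_fst_le _) hDN (hcl ▸ Set.mem_univ _)
  exact absurd hfar (by simp)
end

section
/- Let L = ℕ × ℕ × (ℕ ∪ {∞}) with the partial order: (n₁,i₁,j₁) ≤ (n₂,i₂,j₂) iff either (a) n₁ = n₂, i₁ = i₂ and j₁ ≤ j₂, or (b) n₁ = n₂, j₁ = i₂ = j₂ and i₁ ≤ i₂, or (c) n₂ = n₁ + 1, j₂ = ∞ and j₁ ≤ i₂. For every subset K of L that is compact in the Scott topology and saturated (an upper set), the set {n ∈ ℕ : K ∩ A_n ≠ ∅} is finite, where A_n = {n} × ℕ × (ℕ ∪ {∞}). -/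
lemma lleL_level {p q : MiaoL} (h : lleL p q) : q.1 = p.1 ∨ q.1 = p.1 + 1 := by
  rcases h with ⟨h1, _⟩ | ⟨h1, _⟩ | ⟨h1, _⟩
  · exact Or.inl h1.symm
  · exact Or.inl h1.symm
  · exact Or.inr h1

lemma exists_same_level {D : Set MiaoL} {s : MiaoL}
    (hs : RLUB lleL D s) : ∃ d ∈ D, d.1 = s.1 := by
  by_contra hcon
  push_neg at hcon
  have hub : RUB lleL D (s.1, s.2.1 + 1, ⊤) := by
    intro d hd
    rcases hs.1 d hd with ⟨h1, _⟩ | ⟨h1, _⟩ | ⟨h1, h2, h3⟩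
    · exact absurd h1 (hcon d hd)
    · exact absurd h1 (hcon d hd)
    · exact Or.inr (Or.inr ⟨h1, rfl, h3.trans (by exact_mod_cast le_of_lt (Nat.lt_succ_self _))⟩)
  rcases hs.2 _ hub with ⟨_, h2, _⟩ | ⟨_, _, h3, _⟩ | ⟨h1, _⟩
  · simp at h2
  · exact (WithTop.coe_ne_top (a := s.2.1 + 1)) (by exact_mod_cast h3.symm)
  · simp at h1

lemma lub_mem_or_unbounded {D : Set MiaoL} {s : MiaoL}
    (hD : RDir lleL D) (hs : RLUB lleL D s) :
    s ∈ D ∨ ∀ N : ℕ, ∃ d ∈ D, d.1 = s.1 ∧ d.2.1 = s.2.1 ∧ (N : WithTop ℕ) ≤ d.2.2 := by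
  by_cases hsD : s ∈ D
  · exact Or.inl hsD
  right
  -- every element of D is at the same level as s
  have hlev : ∀ d ∈ D, d.1 = s.1 := by
    intro d hd
    by_contra hne
    have hc : s.1 = d.1 + 1 ∧ s.2.2 = ⊤ ∧ d.2.2 ≤ (s.2.1 : WithTop ℕ) := by
      rcases hs.1 d hd with ⟨h1, _⟩ | ⟨h1, _⟩ | h
      · exact absurd h1 hne
      · exact absurd h1 hne
      · exact h
    obtain ⟨d₀, hd₀D, hd₀1⟩ := exists_same_level hs
    obtain ⟨e, heD, hle₀, hled⟩ := hD.2 d₀ hd₀D d hd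
    have hes := hs.1 e heD
    have he1 : e.1 = s.1 := by
      rcases lleL_level hle₀ with h | h <;> rcases lleL_level hes with h' | h' <;> omega
    have hde : e.2.2 = ⊤ := by
      rcases hled with ⟨h1, _⟩ | ⟨h1, _⟩ | ⟨_, h2, _⟩
      · exfalso; omega
      · exfalso; omega
      · exact h2
    have heq : e = s := by
      rcases hes with ⟨h1, h2, h3⟩ | ⟨h1, h2, _⟩ | ⟨h1, _⟩
      · have hst : s.2.2 = ⊤ := top_le_iff.mp (hde ▸ h3)
        exact Prod.ext he1 (Prod.ext h2 (by rw [hde, hst]))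
      · rw [hde] at h2; exact absurd h2 (by simp)
      · exfalso; omega
    exact hsD (heq ▸ heD)
  have hab : ∀ d ∈ D, (d.2.1 = s.2.1 ∧ d.2.2 ≤ s.2.2) ∨
      (d.2.2 = (s.2.1 : WithTop ℕ) ∧ s.2.2 = (s.2.1 : WithTop ℕ) ∧ d.2.1 ≤ s.2.1) := by
    intro d hd
    rcases hs.1 d hd with ⟨_, h2, h3⟩ | ⟨_, h2, h3, h4⟩ | ⟨h1, _⟩
    · exact Or.inl ⟨h2, h3⟩
    · exact Or.inr ⟨h2, h3, h4⟩
    · exfalso; have := hlev d hd; omega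
  by_cases htop : s.2.2 = ⊤
  · intro N
    by_contra hcon
    push_neg at hcon
    have hall : ∀ d ∈ D, d.2.1 = s.2.1 ∧ d.2.2 ≤ (N : WithTop ℕ) := by
      intro d hd
      rcases hab d hd with ⟨h1, _⟩ | ⟨_, h2, _⟩
      · exact ⟨h1, le_of_lt (hcon d hd (hlev d hd) h1)⟩
      · rw [htop] at h2; exact absurd h2 (by simp)
    have hub : RUB lleL D (s.1, s.2.1, (N : WithTop ℕ)) := by
      intro d hd
      exact Or.inl ⟨hlev d hd, (hall d hd).1, (hall d hd).2⟩
    rcases hs.2 _ hub with ⟨_, _, h3⟩ | ⟨_, h2, _⟩ | ⟨h1, _⟩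
    · rw [htop] at h3; exact (WithTop.not_top_le_coe N) h3
    · rw [htop] at h2; exact absurd h2 (by simp)
    · simp at h1
  · exfalso
    obtain ⟨n, hn⟩ := WithTop.ne_top_iff_exists.mp htop
    -- hn : ↑n = s.2.2
    by_cases hbex : ∃ d₁ ∈ D, d₁.2.2 = (s.2.1 : WithTop ℕ) ∧ d₁.2.1 < s.2.1
    · obtain ⟨d₁, hd₁D, hb1, hb3⟩ := hbex
      have hb2 : s.2.2 = (s.2.1 : WithTop ℕ) := by
        rcases hab d₁ hd₁D with ⟨h1, _⟩ | ⟨_, h2, _⟩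
        · exfalso; omega
        · exact h2
      have hub : RUB lleL D d₁ := by
        intro d₂ hd₂
        obtain ⟨e, heD, hle₁, hle₂⟩ := hD.2 d₁ hd₁D d₂ hd₂
        have he1 : e.1 = s.1 := hlev e heD
        have hd₁1 : d₁.1 = s.1 := hlev d₁ hd₁D
        have he_eq : e = d₁ := by
          rcases hle₁ with ⟨h1, h2, h3⟩ | ⟨h1, h2, h3, h4⟩ | ⟨h1, _⟩
          · rcases hab e heD with ⟨g1, g2⟩ | ⟨g1, g2, g3⟩
            · exfalso; omega
            · exact Prod.ext (by omega) (Prod.ext h2.symm (g1.trans hb1.symm))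
          · have he21 : e.2.1 = s.2.1 := by
              have := h2.symm.trans hb1
              exact_mod_cast this
            have heq : e = s := by
              refine Prod.ext he1 (Prod.ext he21 ?_)
              rw [h3, he21, hb2]
            exact absurd (heq ▸ heD) hsD
          · exfalso; omega
        exact he_eq ▸ hle₂
      rcases hs.2 d₁ hub with ⟨_, h2, _⟩ | ⟨_, h2, _, _⟩ | ⟨h1, _⟩
      · omega
      · have : s.2.1 = d₁.2.1 := by
          have := hb2.symm.trans h2; exact_mod_cast this
        omega
      · have := hlev d₁ hd₁D; omega
    · push_neg at hbex
      have hall : ∀ d ∈ D, d.2.1 = s.2.1 ∧ d.2.2 < s.2.2 := by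
        intro d hd
        rcases hab d hd with ⟨h1, h2⟩ | ⟨h1, h2, h3⟩
        · refine ⟨h1, lt_of_le_of_ne h2 ?_⟩
          intro heq
          exact hsD ((Prod.ext (hlev d hd) (Prod.ext h1 heq) : d = s) ▸ hd)
        · have h4 := hbex d hd h1
          have h5 : d.2.1 = s.2.1 := by omega
          have heq : d = s := Prod.ext (hlev d hd) (Prod.ext h5 (h1.trans h2.symm))
          exact absurd (heq ▸ hd) hsD
      obtain ⟨d₀, hd₀⟩ := hD.1
      have h0 := (hall d₀ hd₀).2
      rw [← hn] at h0
      obtain ⟨m, hm1, hm2⟩ := WithTop.lt_iff_exists_coe.mp h0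
      -- hm1 : d₀.2.2 = ↑m, hm2 : ↑m < ↑n
      have hmn : m < n := by exact_mod_cast hm2
      rcases n with _ | n'
      · omega
      · have hub : RUB lleL D (s.1, s.2.1, ((n' : ℕ) : WithTop ℕ)) := by
          intro d hd
          refine Or.inl ⟨hlev d hd, (hall d hd).1, ?_⟩
          have h2 := (hall d hd).2
          rw [← hn] at h2
          obtain ⟨b, hb, hb'⟩ := WithTop.lt_iff_exists_coe.mp h2
          have : b < n' + 1 := by exact_mod_cast hb'
          rw [hb]
          show ((b:ℕ) : WithTop ℕ) ≤ ((n' : ℕ) : WithTop ℕ)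
          exact_mod_cast Nat.lt_succ_iff.mp this
        rcases hs.2 _ hub with ⟨_, _, h3⟩ | ⟨_, h2, h3, _⟩ | ⟨h1, _⟩
        · rw [← hn] at h3
          have h3' : ((n' + 1 : ℕ) : WithTop ℕ) ≤ ((n' : ℕ) : WithTop ℕ) := h3
          have : n' + 1 ≤ n' := by exact_mod_cast h3'
          omega
        · have h2' : s.2.2 = ((s.2.1 : ℕ) : WithTop ℕ) := h2
          have h3' : ((n' : ℕ) : WithTop ℕ) = ((s.2.1 : ℕ) : WithTop ℕ) := h3
          have e1 : n' + 1 = s.2.1 := by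
            exact WithTop.coe_inj.mp (hn.trans h2')
          have e2 : n' = s.2.1 := by exact_mod_cast h3'
          omega
        · simp at h1

def Vset (g : ℕ → ℕ) (c : ℕ) : Set MiaoL :=
  {p | p.1 ≤ c ∨ (g (p.1 - 1) ≤ p.2.1 ∧ (g p.1 : WithTop ℕ) ≤ p.2.2)}

lemma Vset_open (g : ℕ → ℕ) (c : ℕ) (hmono : Monotone g) (hgc : g c = 0) :
    RScottOpen lleL (Vset g c) := by
  have hg0 : ∀ m, m ≤ c → g m = 0 := fun m hm => Nat.le_zero.mp (hgc ▸ hmono hm)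
  constructor
  · rintro p hp q hpq
    rcases hpq with ⟨h1, h2, h3⟩ | ⟨h1, h2, h3, h4⟩ | ⟨h1, h2, h3⟩
    · -- (a)
      rcases hp with hp | ⟨hp1, hp2⟩
      · exact Or.inl (by omega)
      · exact Or.inr ⟨by rw [← h1, ← h2]; exact hp1, by rw [← h1]; exact hp2.trans h3⟩
    · -- (b)
      rcases hp with hp | ⟨hp1, hp2⟩
      · exact Or.inl (by omega)
      · right
        have hq1 : g q.1 ≤ q.2.1 := by
          have : (g q.1 : WithTop ℕ) ≤ (q.2.1 : WithTop ℕ) := by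
            rw [← h1]; exact hp2.trans_eq h2
          exact_mod_cast this
        exact ⟨le_trans (hmono (Nat.sub_le _ _)) hq1, by rw [h3]; exact_mod_cast hq1⟩
    · -- (c)
      by_cases hq : q.1 ≤ c
      · exact Or.inl hq
      · right
        refine ⟨?_, by rw [h2]; exact le_top⟩
        have hq1 : q.1 - 1 = p.1 := by omega
        rw [hq1]
        rcases hp with hp | ⟨_, hp2⟩
        · rw [hg0 p.1 hp]; exact Nat.zero_le _
        · have : (g p.1 : WithTop ℕ) ≤ (q.2.1 : WithTop ℕ) := hp2.trans h3
          exact_mod_cast this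
  · intro D hD s hs hsV
    obtain ⟨d₀, hd₀D, hd₀1⟩ := exists_same_level hs
    by_cases hsc : s.1 ≤ c
    · exact ⟨d₀, hd₀D, Or.inl (by omega)⟩
    · rcases hsV with h | ⟨h1, h2⟩
      · exact absurd h hsc
      rcases lub_mem_or_unbounded hD hs with hmem | hunb
      · exact ⟨s, hmem, Or.inr ⟨h1, h2⟩⟩
      · obtain ⟨d, hdD, he1, he2, he3⟩ := hunb (g s.1)
        exact ⟨d, hdD, Or.inr ⟨by rw [he1, he2]; exact h1, by rw [he1]; exact he3⟩⟩

def gfun (w : ℕ → MiaoL) (c m : ℕ) : ℕ :=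
  (Finset.Ioc c m).sup (fun k => (w (k + 1)).2.1 + 1)

/-- for every Scott-compact saturated subset `K` of `L`, the set of `n ∈ ℕ`
such that `K` meets `A_n = {n} × ℕ × (ℕ ∪ {∞})` is finite. -/
theorem compact_meets_finitely_many_blocks (K : Set MiaoL)
    (hK : RCompact lleL K) (hsat : RSat lleL K) :
    {n : ℕ | (K ∩ {p : MiaoL | p.1 = n}).Nonempty}.Finite := by
  classical
  have hw : ∀ n : ℕ, ∃ p : MiaoL,
      (K ∩ {q : MiaoL | q.1 = n}).Nonempty → p ∈ K ∧ p.1 = n := by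
    intro n
    by_cases h : (K ∩ {q : MiaoL | q.1 = n}).Nonempty
    · obtain ⟨p, hp1, hp2⟩ := h
      exact ⟨p, fun _ => ⟨hp1, hp2⟩⟩
    · exact ⟨(0, 0, 0), fun h' => absurd h' h⟩
  choose w hwspec using hw
  have hmono : ∀ c, Monotone (gfun w c) := by
    intro c a b hab
    exact Finset.sup_mono (Finset.Ioc_subset_Ioc_right hab)
  have hgc : ∀ c, gfun w c c = 0 := by
    intro c; simp [gfun]
  have hopen : ∀ U ∈ Set.range (fun c => Vset (gfun w c) c), RScottOpen lleL U := by
    rintro U ⟨c, rfl⟩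
    exact Vset_open (gfun w c) c (hmono c) (hgc c)
  have hcover : K ⊆ ⋃₀ Set.range (fun c => Vset (gfun w c) c) := by
    intro p hp
    exact ⟨Vset (gfun w p.1) p.1, ⟨p.1, rfl⟩, Or.inl le_rfl⟩
  obtain ⟨𝒱, h𝒱sub, h𝒱fin, h𝒱cov⟩ := hK _ hopen hcover
  have hc : ∀ U ∈ 𝒱, ∃ c, Vset (gfun w c) c = U := fun U hU => h𝒱sub hU
  choose! F hF using hc
  have hTsub : {n : ℕ | (K ∩ {p : MiaoL | p.1 = n}).Nonempty} ⊆
      ⋃ U ∈ 𝒱, Set.Iic (F U + 1) := by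
    intro n hn
    obtain ⟨hwK, hw1⟩ := hwspec n hn
    obtain ⟨U, hU𝒱, hwU⟩ := h𝒱cov hwK
    refine Set.mem_biUnion hU𝒱 ?_
    by_contra hgt
    have hgt' : F U + 1 < n := by simpa [Set.mem_Iic] using hgt
    rw [← hF U hU𝒱] at hwU
    rcases hwU with h1 | ⟨h1, _⟩
    · rw [hw1] at h1; omega
    · rw [hw1] at h1
      have hle : (w ((n - 1) + 1)).2.1 + 1 ≤ gfun w (F U) (n - 1) :=
        Finset.le_sup (f := fun k => (w (k + 1)).2.1 + 1)
          (Finset.mem_Ioc.mpr (by omega))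
      have hn1 : n - 1 + 1 = n := by omega
      rw [hn1] at hle
      omega
  exact (Set.Finite.biUnion h𝒱fin (fun U _ => Set.finite_Iic _)).subset hTsub
end

section
/- Let L = ℕ × ℕ × (ℕ ∪ {∞}) with the partial order: (n₁,i₁,j₁) ≤ (n₂,i₂,j₂) iff either (a) n₁ = n₂, i₁ = i₂ and j₁ ≤ j₂, or (b) n₁ = n₂, j₁ = i₂ = j₂ and i₁ ≤ i₂, or (c) n₂ = n₁ + 1, j₂ = ∞ and j₁ ≤ i₂, endowed with the Scott topology. Then L (the whole space) is not a KF-set of L: there is no nonempty filtered family 𝒦 of Scott-compact saturated subsets of L such that L is a minimal closed set intersecting every member of 𝒦. -/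
/-! Every Scott-compact subset of `L` meets only finitely many levels `n`. Indeed, a directed set
whose supremum it does not contain climbs a column `(n, i, j)`, `j → ∞`, towards `(n, i, ∞)`.
So if `K` contained points `yₘ` at levels tending to infinity, the unions over `m ≥ N` of the
down-sets of `(yₘ.1, yₘ.2.1, ∞)` would be Scott-closed (each column meets only finitely many of
them), and their complements would form an increasing open cover of `K` without finite subcover.
Hence one member of `𝒦` lies in a level set `{p | p.1 ≤ N}`; by filteredness this proper closed
set meets every member of `𝒦`, so `L` is not minimal. -/

open Filter

namespace lleL

variable {p q : MiaoL}

lemma fst_le (h : lleL p q) : p.1 ≤ q.1 := by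
  rcases h with ⟨h, -⟩ | ⟨h, -⟩ | ⟨h, -⟩ <;> omega

lemma fst_eq_of_ne_top (h : lleL p q) (hq : q.2.2 ≠ ⊤) : q.1 = p.1 := by
  rcases h with ⟨h, -⟩ | ⟨h, -⟩ | ⟨-, h, -⟩
  exacts [h.symm, h.symm, absurd h hq]

lemma of_fst_eq (h : lleL p q) (hpq : p.1 = q.1) :
    (p.2.1 = q.2.1 ∧ p.2.2 ≤ q.2.2) ∨
      (p.2.2 = q.2.1 ∧ q.2.2 = q.2.1 ∧ p.2.1 ≤ q.2.1) := by
  rcases h with ⟨-, h⟩ | ⟨-, h⟩ | ⟨h, -⟩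
  exacts [Or.inl h, Or.inr h, by omega]

lemma eq_of_snd_snd_eq_top (h : lleL p q) (hp : p.2.2 = ⊤) : q = p := by
  rcases h with ⟨h₁, h₂, h₃⟩ | ⟨-, h, -⟩ | ⟨-, -, h⟩
  · exact Prod.ext h₁.symm (Prod.ext h₂.symm ((top_le_iff.mp (hp ▸ h₃)).trans hp.symm))
  · exact absurd (hp ▸ h) WithTop.top_ne_coe
  · exact absurd (hp ▸ h) (by simp)

lemma antisymm (h : lleL p q) (h' : lleL q p) : p = q := by
  obtain ⟨a, b, c⟩ := p
  obtain ⟨d, e, f⟩ := q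
  simp only [lleL] at h h'
  grind

end lleL

namespace RLUB

lemma eq_of_mem_of_rub {α : Type*} {r : α → α → Prop}
    (hanti : ∀ x y, r x y → r y x → x = y) {D : Set α} {s d : α}
    (hs : RLUB r D s) (hd : d ∈ D) (hub : RUB r D d) : s = d :=
  hanti s d (hs.2 d hub) (hs.1 d hd)

variable {D : Set MiaoL} {s : MiaoL}

lemma snd_snd_ne_top (hlub : RLUB lleL D s) (hsD : s ∉ D) {d : MiaoL} (hd : d ∈ D) :
    d.2.2 ≠ ⊤ := fun htop ↦
  hsD ((hlub.1 d hd).eq_of_snd_snd_eq_top htop ▸ hd)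

lemma fst_eq (hlub : RLUB lleL D s) (hdir : RDir lleL D) (hsD : s ∉ D) {d : MiaoL}
    (hd : d ∈ D) : d.1 = s.1 := by
  have hlevel : ∀ e ∈ D, e.1 = d.1 := by
    intro e he
    obtain ⟨z, hz, hdz, hez⟩ := hdir.2 d hd e he
    have hz_ne := hlub.snd_snd_ne_top hsD hz
    rw [← hez.fst_eq_of_ne_top hz_ne, hdz.fst_eq_of_ne_top hz_ne]
  by_contra hne
  -- then all of `D` lies one level below `s`, and `(s.1, s.2.1 + 1, ⊤)` is another upper bound
  have hub : RUB lleL D (s.1, s.2.1 + 1, ⊤) := by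
    intro e he
    rcases hlub.1 e he with ⟨h, -⟩ | ⟨h, -⟩ | ⟨h, -, hj⟩
    · exact absurd (hlevel e he ▸ h) hne
    · exact absurd (hlevel e he ▸ h) hne
    · exact Or.inr (Or.inr ⟨h, rfl, hj.trans (WithTop.coe_le_coe.mpr (Nat.le_succ _))⟩)
  rcases hlub.2 _ hub with ⟨-, h, -⟩ | ⟨-, -, h, -⟩ | ⟨h, -⟩
  exacts [by simp at h, WithTop.top_ne_coe h, by simp at h]

lemma snd_fst_eq (hlub : RLUB lleL D s) (hdir : RDir lleL D) (hsD : s ∉ D) {d : MiaoL}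
    (hd : d ∈ D) : d.2.1 = s.2.1 := by
  have hcases : ∀ z ∈ D, z.2.1 ≠ s.2.1 → z.2.2 = s.2.1 ∧ s.2.2 = s.2.1 := by
    intro z hz hz_ne
    rcases (hlub.1 z hz).of_fst_eq (hlub.fst_eq hdir hsD hz) with ⟨h, -⟩ | ⟨h₁, h₂, -⟩
    exacts [absurd h hz_ne, ⟨h₁, h₂⟩]
  by_contra hne
  obtain ⟨hd₂, hs₂⟩ := hcases d hd hne
  -- nothing in `D` lies strictly above `d`, so `d` is the greatest element of `D`
  have hub : RUB lleL D d := by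
    intro e he
    obtain ⟨z, hz, hdz, hez⟩ := hdir.2 d hd e he
    suffices z = d from this ▸ hez
    have hzd : d.1 = z.1 := (hlub.fst_eq hdir hsD hd).trans
      (hlub.fst_eq hdir hsD hz).symm
    rcases hdz.of_fst_eq hzd with ⟨h, -⟩ | ⟨h₁, h₂, -⟩
    · exact Prod.ext hzd.symm (Prod.ext h.symm ((hcases z hz (h ▸ hne)).1.trans hd₂.symm))
    · have hz₂ : z.2.1 = s.2.1 := WithTop.coe_injective (h₁.symm.trans hd₂)
      have hzs : z = s :=
        Prod.ext (hlub.fst_eq hdir hsD hz) (Prod.ext hz₂ (by rw [h₂, hz₂, hs₂]))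
      exact absurd (hzs ▸ hz) hsD
  exact hsD (by rwa [hlub.eq_of_mem_of_rub (fun _ _ ↦ lleL.antisymm) hd hub])

lemma snd_snd_eq_top_and_frequently_mem (hlub : RLUB lleL D s) (hdir : RDir lleL D)
    (hsD : s ∉ D) :
    s.2.2 = ⊤ ∧ ∃ᶠ j : ℕ in atTop, ((s.1, s.2.1, (j : WithTop ℕ)) : MiaoL) ∈ D := by
  set J := {j : ℕ | ((s.1, s.2.1, (j : WithTop ℕ)) : MiaoL) ∈ D}
  have hD : ∀ d ∈ D, ∃ j ∈ J, d = (s.1, s.2.1, (j : WithTop ℕ)) := by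
    intro d hd
    obtain ⟨j, hj⟩ := WithTop.ne_top_iff_exists.mp (hlub.snd_snd_ne_top hsD hd)
    have hdj : d = (s.1, s.2.1, (j : WithTop ℕ)) :=
      Prod.ext (hlub.fst_eq hdir hsD hd) (Prod.ext (hlub.snd_fst_eq hdir hsD hd) hj.symm)
    exact ⟨j, show _ ∈ D from hdj ▸ hd, hdj⟩
  -- a largest third coordinate would give a greatest element of `D`, which would be `s`
  have hJ : ¬ BddAbove J := by
    intro hbdd
    obtain ⟨j₀, hj₀, -⟩ := hD _ hdir.1.some_mem
    have hmem : sSup J ∈ J := Nat.sSup_mem ⟨j₀, hj₀⟩ hbdd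
    have hub : RUB lleL D (s.1, s.2.1, (sSup J : ℕ)) := by
      intro e he
      obtain ⟨j, hj, rfl⟩ := hD e he
      exact Or.inl ⟨rfl, rfl, WithTop.coe_le_coe.mpr (le_csSup hbdd hj)⟩
    exact hsD (by rwa [hlub.eq_of_mem_of_rub (fun _ _ ↦ lleL.antisymm) hmem hub])
  have hfreq : ∃ᶠ j in atTop, j ∈ J :=
    Nat.frequently_atTop_iff_infinite.mpr fun hfin ↦ hJ hfin.bddAbove
  refine ⟨WithTop.eq_top_iff_forall_ge.mpr fun n ↦ ?_, hfreq⟩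
  obtain ⟨j, hnj, hj⟩ := hfreq.forall_exists_of_atTop n
  refine (WithTop.coe_le_coe.mpr hnj).trans ?_
  rcases (hlub.1 _ hj).of_fst_eq rfl with ⟨-, h⟩ | ⟨h₁, h₂, -⟩
  exacts [h, (h₁.trans h₂.symm).le]

end RLUB

lemma rScottOpen_of_rSat_of_eventually {U : Set MiaoL} (hU : RSat lleL U)
    (hlim : ∀ n i : ℕ, ((n, i, ⊤) : MiaoL) ∈ U →
      ∀ᶠ j : ℕ in atTop, ((n, i, (j : WithTop ℕ)) : MiaoL) ∈ U) :
    RScottOpen lleL U := by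
  refine ⟨hU, fun D hdir s hlub hs ↦ ?_⟩
  by_cases hsD : s ∈ D
  · exact ⟨s, hsD, hs⟩
  obtain ⟨htop, hfreq⟩ := hlub.snd_snd_eq_top_and_frequently_mem hdir hsD
  obtain ⟨j, hjD, hjU⟩ := (hfreq.and_eventually (hlim s.1 s.2.1 (htop ▸ hs))).exists
  exact ⟨_, hjD, hjU⟩

lemma RCompact.exists_subset_of_monotone {α : Type*} {r : α → α → Prop} {K : Set α}
    (hK : RCompact r K) {U : ℕ → Set α} (hU : ∀ n, RScottOpen r (U n)) (hmono : Monotone U)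
    (hcov : K ⊆ ⋃ n, U n) : ∃ n, K ⊆ U n := by
  have hcov' : K ⊆ ⋃₀ (U '' Set.univ) := by rwa [Set.image_univ, Set.sUnion_range]
  obtain ⟨t, -, ht, hKt⟩ := Set.exists_subset_image_finite_and.mp
    (hK _ (by rintro _ ⟨n, -, rfl⟩; exact hU n) hcov')
  obtain ⟨N, hN⟩ := ht.bddAbove
  refine ⟨N, hKt.trans (Set.sUnion_subset ?_)⟩
  rintro _ ⟨n, hn, rfl⟩
  exact hmono (hN hn)

/-- The down-set of `(n, i, ⊤)` in the order generated by `lleL`. -/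
def belowTop (n i : ℕ) : Set MiaoL :=
  {p | (p.1 = n ∧ p.2.1 ≤ i ∧ p.2.2 ≤ i) ∨ (p.1 = n ∧ p.2.1 = i) ∨
    (p.1 + 1 = n ∧ p.2.2 ≤ i)}

section belowTop

variable {n i : ℕ} {p q : MiaoL}

lemma mem_belowTop_of_lleL (h : lleL p q) (hq : q ∈ belowTop n i) : p ∈ belowTop n i := by
  obtain ⟨a, b, c⟩ := p
  obtain ⟨d, e, f⟩ := q
  have htop : ∀ k : ℕ, ¬ ((⊤ : WithTop ℕ) ≤ k) := by simp
  simp only [lleL, belowTop, Set.mem_ofPred_eq] at h hq ⊢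
  grind

lemma le_fst_add_one_of_mem_belowTop (hp : p ∈ belowTop n i) : n ≤ p.1 + 1 := by
  rcases hp with ⟨h, -⟩ | ⟨h, -⟩ | ⟨h, -⟩ <;> omega

end belowTop

lemma rScottOpen_compl_iUnion_belowTop {a b : ℕ → ℕ} (ha : Tendsto a atTop atTop) (N : ℕ) :
    RScottOpen lleL (⋃ m ≥ N, belowTop (a m) (b m))ᶜ := by
  refine rScottOpen_of_rSat_of_eventually ?_ fun n i hni ↦ ?_
  · intro p hp q hpq hq
    obtain ⟨m, hm, hqm⟩ := Set.mem_iUnion₂.mp hq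
    exact hp (Set.mem_iUnion₂.mpr ⟨m, hm, mem_belowTop_of_lleL hpq hqm⟩)
  obtain ⟨M, hM⟩ := eventually_atTop.mp (tendsto_atTop.mp ha (n + 2))
  -- only the finitely many `m < M` have `a m` low enough to matter
  filter_upwards [(Set.finite_Iio M).eventually_all.mpr fun m _ ↦ eventually_gt_atTop (b m)]
    with j hj
  simp only [Set.mem_compl_iff, Set.mem_iUnion, not_exists] at hni ⊢
  intro m hm hjm
  have hmM : m < M := by
    by_contra h
    have := hM m (not_lt.mp h)
    have := le_fst_add_one_of_mem_belowTop hjm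
    omega
  rcases hjm with ⟨-, -, h⟩ | ⟨h₁, h₂⟩ | ⟨-, h⟩
  · exact (hj m hmM).not_ge (WithTop.coe_le_coe.mp h)
  · exact hni m hm (Or.inr (Or.inl ⟨h₁, h₂⟩))
  · exact (hj m hmM).not_ge (WithTop.coe_le_coe.mp h)

theorem RCompact.bddAbove_fst {K : Set MiaoL} (hK : RCompact lleL K) :
    BddAbove (Prod.fst '' K) := by
  by_contra hunbdd
  obtain ⟨y, hyK, hy⟩ : ∃ y : ℕ → MiaoL, (∀ n, y n ∈ K) ∧ ∀ n, n < (y n).1 := by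
    simp only [not_bddAbove_iff, Set.exists_mem_image] at hunbdd
    choose y hyK hy using hunbdd
    exact ⟨y, hyK, hy⟩
  have ha : Tendsto (fun n ↦ (y n).1) atTop atTop :=
    tendsto_atTop_mono (fun n ↦ (hy n).le) tendsto_id
  -- the points `y m`, `m ≥ N`, lie in a closed set; these closed sets decrease to `∅`
  let U : ℕ → Set MiaoL := fun N ↦ (⋃ m ≥ N, belowTop (y m).1 (y m).2.1)ᶜ
  have hmono : Monotone U := fun N N' hNN' ↦
    Set.compl_subset_compl.mpr (Set.biUnion_subset_biUnion_left fun m hm ↦ le_trans hNN' hm)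
  have hcov : K ⊆ ⋃ N, U N := by
    intro p _
    obtain ⟨M, hM⟩ := eventually_atTop.mp (tendsto_atTop.mp ha (p.1 + 2))
    refine Set.mem_iUnion.mpr ⟨M, ?_⟩
    simp only [U, Set.mem_compl_iff, Set.mem_iUnion, not_exists]
    intro m hm hpm
    have := hM m hm
    have := le_fst_add_one_of_mem_belowTop hpm
    omega
  obtain ⟨N, hN⟩ :=
    hK.exists_subset_of_monotone (rScottOpen_compl_iUnion_belowTop ha) hmono hcov
  exact hN (hyK N) (Set.mem_iUnion₂.mpr ⟨N, le_rfl, Or.inr (Or.inl ⟨rfl, rfl⟩)⟩)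

lemma rScottOpen_setOf_lt_fst (N : ℕ) : RScottOpen lleL {p : MiaoL | N < p.1} :=
  rScottOpen_of_rSat_of_eventually (fun _ hp _ h ↦ lt_of_lt_of_le hp h.fst_le)
    fun _ _ hn ↦ Eventually.of_forall fun _ ↦ hn

/-- `L` itself is not a KF-set of `L`: there is no nonempty filtered family
`𝒦` of Scott-compact saturated subsets of `L` such that `L` is a minimal closed set
intersecting every member of `𝒦`. -/
theorem univ_not_KF :
    ¬ ∃ 𝒦 : Set (Set MiaoL), 𝒦.Nonempty ∧
      (∀ K ∈ 𝒦, RCompact lleL K ∧ RSat lleL K) ∧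
      (∀ K₁ ∈ 𝒦, ∀ K₂ ∈ 𝒦, ∃ K₃ ∈ 𝒦, K₃ ⊆ K₁ ∩ K₂) ∧
      (∀ K ∈ 𝒦, ((Set.univ : Set MiaoL) ∩ K).Nonempty) ∧
      (∀ C : Set MiaoL, RScottClosed lleL C → (∀ K ∈ 𝒦, (C ∩ K).Nonempty) →
        C = Set.univ) := by
  rintro ⟨𝒦, ⟨K₀, hK₀⟩, hcompact, hfilt, hmeet, hmin⟩
  obtain ⟨N, hN⟩ := (hcompact K₀ hK₀).1.bddAbove_fst
  have hC : RScottClosed lleL {p : MiaoL | p.1 ≤ N} := by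
    simpa only [RScottClosed, Set.compl_ofPred, not_le] using rScottOpen_setOf_lt_fst N
  obtain ⟨K, hK, hCK⟩ : ∃ K ∈ 𝒦, ¬ ({p : MiaoL | p.1 ≤ N} ∩ K).Nonempty := by
    by_contra! hall
    have hN1 : ((N + 1, 0, 0) : MiaoL) ∈ {p : MiaoL | p.1 ≤ N} := by
      rw [hmin _ hC hall]; trivial
    exact Nat.not_succ_le_self N hN1
  obtain ⟨K₃, hK₃, hsub⟩ := hfilt K₀ hK₀ K hK
  obtain ⟨p, -, hp⟩ := hmeet K₃ hK₃
  exact hCK ⟨p, hN ⟨p, (hsub hp).1, rfl⟩, (hsub hp).2⟩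
end

section
/- Let L = ℕ × ℕ × (ℕ ∪ {∞}) with the partial order: (n₁,i₁,j₁) ≤ (n₂,i₂,j₂) iff either (a) n₁ = n₂, i₁ = i₂ and j₁ ≤ j₂, or (b) n₁ = n₂, j₁ = i₂ = j₂ and i₁ ≤ i₂, or (c) n₂ = n₁ + 1, j₂ = ∞ and j₁ ≤ i₂. Then L is a tapered closed subset of itself: L, viewed as an element of the complete lattice Γ(L) of Scott-closed subsets of L, belongs to the smallest subfamily of Γ(L) that contains every principal ideal ↓x (x ∈ L) and is closed under suprema in Γ(L) of directed (under inclusion) subfamilies. -/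
/-- Scott-closed set described directly: a lower set closed under suprema of directed
subsets that exist. -/
def RScottClosed' {α : Type*} (r : α → α → Prop) (C : Set α) : Prop :=
  (∀ x ∈ C, ∀ y, r y x → y ∈ C) ∧
  ∀ D ⊆ C, RDir r D → ∀ s : α, RLUB r D s → s ∈ C

/-- Scott closure: the intersection of all Scott-closed supersets. -/
def RClosure' {α : Type*} (r : α → α → Prop) (A : Set α) : Set α :=
  ⋂₀ {C : Set α | RScottClosed' r C ∧ A ⊆ C}

namespace MiaoAux

abbrev dsetL (x : MiaoL) : Set MiaoL := {y | lleL y x}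

lemma subset_closure' {A : Set MiaoL} : A ⊆ RClosure' lleL A := by
  intro x hx
  exact Set.mem_sInter.mpr fun C hC => hC.2 hx

lemma closure_subset' {A C : Set MiaoL} (hC : RScottClosed' lleL C) (hAC : A ⊆ C) :
    RClosure' lleL A ⊆ C :=
  Set.sInter_subset_of_mem ⟨hC, hAC⟩

lemma closed_closure' (A : Set MiaoL) : RScottClosed' lleL (RClosure' lleL A) := by
  constructor
  · intro x hx y hyx
    exact Set.mem_sInter.mpr fun C hC => hC.1.1 x (Set.mem_sInter.mp hx C hC) y hyx
  · intro D hD hdir s hs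
    exact Set.mem_sInter.mpr fun C hC =>
      hC.1.2 D (fun d hd => Set.mem_sInter.mp (hD hd) C hC) hdir s hs

lemma mem_top {C : Set MiaoL} (hC : RScottClosed' lleL C) {a i : ℕ}
    (h : ∀ j : ℕ, ((a, i, (j : WithTop ℕ)) : MiaoL) ∈ C) :
    ((a, i, (⊤ : WithTop ℕ)) : MiaoL) ∈ C := by
  apply hC.2 (Set.range fun j : ℕ => ((a, i, (j : WithTop ℕ)) : MiaoL))
  · rintro d ⟨j, rfl⟩; exact h j
  · refine ⟨⟨_, ⟨0, rfl⟩⟩, ?_⟩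
    rintro x ⟨j1, rfl⟩ y ⟨j2, rfl⟩
    refine ⟨_, ⟨max j1 j2, rfl⟩, Or.inl ⟨rfl, rfl, ?_⟩, Or.inl ⟨rfl, rfl, ?_⟩⟩
    · exact Nat.cast_le.mpr (le_max_left j1 j2)
    · exact Nat.cast_le.mpr (le_max_right j1 j2)
  · constructor
    · rintro d ⟨j, rfl⟩
      exact Or.inl ⟨rfl, rfl, le_top⟩
    · rintro ⟨t1, t2, t3⟩ ht
      rcases ht _ ⟨t2 + 1, rfl⟩ with ⟨h1, h2, h3⟩ | ⟨h1, h2, h3, h4⟩ | ⟨h1, h2, h3⟩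
      · simp only at h1 h2 h3
        subst h1; subst h2
        rcases eq_or_ne t3 ⊤ with rfl | hne
        · exact Or.inl ⟨rfl, rfl, le_rfl⟩
        · obtain ⟨w, rfl⟩ := WithTop.ne_top_iff_exists.mp hne
          exfalso
          rcases ht _ ⟨w + 1, rfl⟩ with ⟨g1, g2, g3⟩ | ⟨g1, g2, g3, g4⟩ | ⟨g1, g2, g3⟩
          · simp only at g3
            exact absurd (Nat.cast_le.mp g3) (by omega)
          · simp only at g2 g3
            have e1 : w + 1 = i := Nat.cast_inj.mp g2
            have e2' : w = i := Nat.cast_inj.mp g3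
            omega
          · simp only at g1
            omega
      · simp only at h2
        exact absurd (Nat.cast_inj.mp h2) (by omega)
      · simp only at h3
        exact absurd (Nat.cast_le.mp h3) (by omega)

lemma level_mem : ∀ m : ℕ, ∀ C : Set MiaoL, RScottClosed' lleL C →
    (∀ i j : ℕ, ((m, i, (j : WithTop ℕ)) : MiaoL) ∈ C) →
    ∀ p : MiaoL, p.1 ≤ m → p ∈ C := by
  intro m
  induction m with
  | zero =>
    rintro C hC hfin ⟨a, i, j⟩ hp
    simp only at hp
    interval_cases a
    rcases eq_or_ne j ⊤ with rfl | hne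
    · exact mem_top hC (hfin i)
    · obtain ⟨w, rfl⟩ := WithTop.ne_top_iff_exists.mp hne
      exact hfin i w
  | succ m ih =>
    intro C hC hfin p hp
    have hfin' : ∀ i j : ℕ, ((m, i, (j : WithTop ℕ)) : MiaoL) ∈ C := by
      intro i j
      have htop : ((m + 1, j, (⊤ : WithTop ℕ)) : MiaoL) ∈ C := mem_top hC (hfin j)
      exact hC.1 _ htop _ (Or.inr (Or.inr ⟨rfl, rfl, le_rfl⟩))
    rcases Nat.lt_or_ge p.1 (m + 1) with hlt | hge
    · exact ih C hC hfin' p (Nat.lt_succ_iff.mp hlt)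
    · obtain ⟨a, i, j⟩ := p
      simp only at hp hge
      have ha : a = m + 1 := le_antisymm hp hge
      subst ha
      rcases eq_or_ne j ⊤ with rfl | hne
      · exact mem_top hC (hfin i)
      · obtain ⟨w, rfl⟩ := WithTop.ne_top_iff_exists.mp hne
        exact hfin i w

def Mset (n k : ℕ) : Set MiaoL := RClosure' lleL (dsetL (n, k, (k : WithTop ℕ)))

def Nset (n : ℕ) : Set MiaoL := RClosure' lleL (⋃₀ {S | ∃ k, S = Mset n k})

lemma dsetL_sub (n k : ℕ) :
    dsetL (n, k, (k : WithTop ℕ)) ⊆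
      {y : MiaoL | ∃ a b : ℕ, y = (n, a, (b : WithTop ℕ)) ∧ a ≤ k ∧ b ≤ k} := by
  rintro ⟨y1, y2, y3⟩ (⟨h1, h2, h3⟩ | ⟨h1, h2, h3, h4⟩ | ⟨h1, h2, h3⟩)
  · simp only at h1 h2 h3
    obtain ⟨b, rfl, hb⟩ := WithTop.le_coe_iff.mp h3
    exact ⟨y2, b, by simp [h1, h2], le_of_eq h2, hb⟩
  · simp only at h1 h2 h3 h4
    exact ⟨y2, k, by simp [h1, h2], h4, le_rfl⟩
  · simp only at h2
    exact absurd h2 (WithTop.coe_ne_top)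

lemma mem_Mset {n a b k : ℕ} (ha : a ≤ k) (hb : b ≤ k) :
    ((n, a, (b : WithTop ℕ)) : MiaoL) ∈ Mset n k := by
  refine Set.mem_sInter.mpr ?_
  rintro C ⟨hC, hsub⟩
  have h1 : ((n, a, (k : WithTop ℕ)) : MiaoL) ∈ C :=
    hsub (Or.inr (Or.inl ⟨rfl, rfl, rfl, ha⟩))
  exact hC.1 _ h1 _ (Or.inl ⟨rfl, rfl, Nat.cast_le.mpr hb⟩)

lemma Mset_mono {n k k' : ℕ} (h : k ≤ k') : Mset n k ⊆ Mset n k' := by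
  apply closure_subset' (closed_closure' _)
  intro y hy
  obtain ⟨a, b, rfl, ha, hb⟩ := dsetL_sub n k hy
  exact mem_Mset (ha.trans h) (hb.trans h)

lemma mem_Nset_fin {n i j : ℕ} : ((n, i, (j : WithTop ℕ)) : MiaoL) ∈ Nset n :=
  subset_closure'
    ⟨Mset n (max i j), ⟨max i j, rfl⟩, mem_Mset (le_max_left i j) (le_max_right i j)⟩

lemma Nset_level {n : ℕ} : ∀ p : MiaoL, p.1 ≤ n → p ∈ Nset n :=
  level_mem n _ (closed_closure' _) (fun _ _ => mem_Nset_fin)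

lemma lleL_fst {p q : MiaoL} (h : lleL p q) : p.1 ≤ q.1 := by
  rcases h with ⟨h, _⟩ | ⟨h, _⟩ | ⟨h, _⟩ <;> omega

lemma Nset_mono {n m : ℕ} (h : n ≤ m) : Nset n ⊆ Nset m := by
  apply closure_subset' (closed_closure' _)
  rintro y ⟨S, ⟨k, rfl⟩, hy⟩
  refine closure_subset' (closed_closure' _) ?_ hy
  intro z hz
  exact Nset_level z (le_trans (lleL_fst hz) h)
end MiaoAux

open MiaoAux

/-- `L` (i.e. `Set.univ`, viewed as an element of the complete lattice
`Γ(L)` of Scott-closed sets, in which the supremum of a family is the Scott-closure of its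
union) is a tapered closed set: it lies in every family of sets that contains all principal
ideals `↓x` and is closed under suprema in `Γ(L)` of nonempty directed (under inclusion)
subfamilies — i.e. it belongs to the smallest such family, the d-closure of
`{↓x : x ∈ L}`. -/
theorem univ_tapered :
    ∀ F : Set (Set MiaoL),
      (∀ x : MiaoL, {y : MiaoL | lleL y x} ∈ F) →
      (∀ 𝒞 ⊆ F, 𝒞.Nonempty → DirectedOn (· ⊆ ·) 𝒞 → RClosure' lleL (⋃₀ 𝒞) ∈ F) →
      (Set.univ : Set MiaoL) ∈ F := by
  intro F h1 h2
  have hM : ∀ n k : ℕ, Mset n k ∈ F := by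
    intro n k
    have hsing := h2 {dsetL (n, k, (k : WithTop ℕ))}
      (by rintro S hS; rw [Set.mem_singleton_iff] at hS; subst hS; exact h1 _)
      ⟨_, rfl⟩
      (by
        rintro S hS S' hS'
        rw [Set.mem_singleton_iff] at hS hS'
        exact ⟨_, rfl, by rw [hS], by rw [hS']⟩)
    rw [Set.sUnion_singleton] at hsing
    exact hsing
  have hN : ∀ n : ℕ, Nset n ∈ F := by
    intro n
    exact h2 _ (by rintro S ⟨k, rfl⟩; exact hM n k) ⟨Mset n 0, 0, rfl⟩
      (by
        rintro S ⟨k, rfl⟩ S' ⟨k', rfl⟩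
        exact ⟨Mset n (max k k'), ⟨max k k', rfl⟩,
          Mset_mono (le_max_left k k'), Mset_mono (le_max_right k k')⟩)
  have hU := h2 {S | ∃ n : ℕ, S = Nset n}
    (by rintro S ⟨n, rfl⟩; exact hN n) ⟨Nset 0, 0, rfl⟩
    (by
      rintro S ⟨n, rfl⟩ S' ⟨n', rfl⟩
      exact ⟨Nset (max n n'), ⟨max n n', rfl⟩,
        Nset_mono (le_max_left n n'), Nset_mono (le_max_right n n')⟩)
  have heq : RClosure' lleL (⋃₀ {S | ∃ n : ℕ, S = Nset n}) = Set.univ := by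
    apply Set.eq_univ_of_univ_subset
    intro p _
    exact subset_closure' ⟨Nset p.1, ⟨p.1, rfl⟩, Nset_level p le_rfl⟩
  rwa [heq] at hU
end

section
/- Let P be a poset and let 𝒟 ∈ ℋ, i.e. 𝒟 is a family of nonempty Scott-closed subsets of P such that ↓a ∈ 𝒟 for every A ∈ 𝒟 and a ∈ A, and 𝒟 is d-closed in Γ(P). Then ⋃𝒟 is Scott-closed; consequently the supremum of 𝒟 in Γ(P) equals ⋃𝒟. -/
/-- The Scott closure: the intersection of all Scott-closed supersets. -/
def scottClosure {P : Type*} [Preorder P] (A : Set P) : Set P :=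
  ⋂₀ {C : Set P | ScottClosed C ∧ A ⊆ C}

/-- The supremum of a family of sets in the complete lattice `Γ(P)` of Scott-closed sets:
the Scott closure of its union. -/
def GammaSup {P : Type*} [Preorder P] (𝒞 : Set (Set P)) : Set P :=
  scottClosure (⋃₀ 𝒞)

/-- `𝒟 ∈ ℋ`: `𝒟` is a family of nonempty Scott-closed sets such that `↓a ∈ 𝒟` whenever
`a ∈ A ∈ 𝒟`, and `𝒟` is d-closed: the supremum in `Γ(P)` of any nonempty directed (under
inclusion) subfamily of `𝒟` belongs to `𝒟`. -/
def MemH {P : Type*} [Preorder P] (𝒟 : Set (Set P)) : Prop :=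
  (∀ A ∈ 𝒟, ScottClosed A ∧ A.Nonempty) ∧
  (∀ A ∈ 𝒟, ∀ a ∈ A, Set.Iic a ∈ 𝒟) ∧
  (∀ 𝒞 ⊆ 𝒟, 𝒞.Nonempty → DirectedOn (· ⊆ ·) 𝒞 → GammaSup 𝒞 ∈ 𝒟)

/-- `A` is beneath `B` (`A ≺ B`): for every `𝒟 ∈ ℋ` with `B` contained in the supremum of
`𝒟` in `Γ(P)`, one has `A ∈ 𝒟`. -/
def Beneath {P : Type*} [Preorder P] (A B : Set P) : Prop :=
  ∀ 𝒟 : Set (Set P), MemH 𝒟 → B ⊆ GammaSup 𝒟 → A ∈ 𝒟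

/-- A pre-C-compact element of `Γ(P)`: a Scott-closed set `A` with `A ≺ A`. -/
def PreCCompact {P : Type*} [Preorder P] (A : Set P) : Prop :=
  ScottClosed A ∧ Beneath A A


lemma scottClosed_scottClosure {P : Type*} [Preorder P] (A : Set P) :
    ScottClosed (scottClosure A) := by
  constructor
  · intro x y hxy hy C hC
    exact hC.1.1 hxy (hy C hC)
  · intro D hD hne hdir a ha C hC
    exact hC.1.2 D (fun d hd => hD hd C hC) hne hdir a ha

lemma subset_scottClosure {P : Type*} [Preorder P] (A : Set P) :
    A ⊆ scottClosure A := fun x hx C hC => hC.2 hx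

/-- for every `𝒟 ∈ ℋ`, the union `⋃𝒟` is Scott-closed; consequently the
supremum of `𝒟` in `Γ(P)` equals `⋃𝒟`. -/
theorem memH_sUnion_scottClosed {P : Type*} [PartialOrder P] (𝒟 : Set (Set P))
    (h𝒟 : MemH 𝒟) : ScottClosed (⋃₀ 𝒟) ∧ GammaSup 𝒟 = ⋃₀ 𝒟 := by
  obtain ⟨hSC, hIic, hd⟩ := h𝒟
  have hclosed : ScottClosed (⋃₀ 𝒟) := by
    constructor
    · intro x y hxy hy
      obtain ⟨A, hA, hyA⟩ := hy
      exact ⟨A, hA, (hSC A hA).1.1 hxy hyA⟩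
    · intro D hD hne hdir a ha
      set 𝒞 : Set (Set P) := (fun d => Set.Iic d) '' D with h𝒞
      have h𝒞sub : 𝒞 ⊆ 𝒟 := by
        rintro _ ⟨d, hd', rfl⟩
        obtain ⟨A, hA, hdA⟩ := hD hd'
        exact hIic A hA d hdA
      have h𝒞ne : 𝒞.Nonempty := hne.image _
      have h𝒞dir : DirectedOn (· ⊆ ·) 𝒞 := by
        rintro _ ⟨d, hd', rfl⟩ _ ⟨e, he', rfl⟩
        obtain ⟨f, hf, hdf, hef⟩ := hdir d hd' e he'
        exact ⟨Set.Iic f, ⟨f, hf, rfl⟩, Set.Iic_subset_Iic.2 hdf,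
          Set.Iic_subset_Iic.2 hef⟩
      have hmem : GammaSup 𝒞 ∈ 𝒟 := hd 𝒞 h𝒞sub h𝒞ne h𝒞dir
      have hDsub : D ⊆ GammaSup 𝒞 := by
        intro d hd'
        exact subset_scottClosure _ ⟨Set.Iic d, ⟨d, hd', rfl⟩, le_refl d⟩
      have haG : a ∈ GammaSup 𝒞 :=
        (scottClosed_scottClosure _).2 D hDsub hne hdir a ha
      exact ⟨GammaSup 𝒞, hmem, haG⟩
  refine ⟨hclosed, ?_⟩
  apply Set.Subset.antisymm
  · intro x hx
    exact hx (⋃₀ 𝒟) ⟨hclosed, subset_refl _⟩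
  · exact subset_scottClosure _
end

section
/- Let P be a poset. Every pre-C-compact element A of Γ(P) is an irreducible Scott-closed subset of P. -/
lemma scottClosed_Iic {P : Type*} [Preorder P] (a : P) : ScottClosed (Set.Iic a) := by
  constructor
  · exact fun x y hxy hx => le_trans hxy hx
  · intro D hD hne _hdir b hb
    exact hb.2 (fun d hd => hD hd)

lemma scottClosure_min {P : Type*} [Preorder P] {A C : Set P} (hC : ScottClosed C)
    (h : A ⊆ C) : scottClosure A ⊆ C :=
  Set.sInter_subset_of_mem ⟨hC, h⟩

/-- every pre-C-compact element of `Γ(P)` is an irreducible Scott-closed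
set. -/
theorem preCCompact_irreducible {P : Type*} [PartialOrder P] (A : Set P)
    (hA : PreCCompact A) :
    ScottClosed A ∧ A.Nonempty ∧
      ∀ B C : Set P, ScottClosed B → ScottClosed C → A ⊆ B ∪ C → A ⊆ B ∨ A ⊆ C := by
  obtain ⟨hSc, hBen⟩ := hA
  refine ⟨hSc, ?_, ?_⟩
  · -- nonempty: use 𝒟₀ = all nonempty Scott-closed sets
    set 𝒟 : Set (Set P) := {E | ScottClosed E ∧ E.Nonempty} with h𝒟
    have hmem : MemH 𝒟 := by
      refine ⟨fun E hE => hE, fun E hE a ha => ⟨scottClosed_Iic a, ⟨a, le_refl a⟩⟩, ?_⟩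
      intro 𝒞 h𝒞 hne hdir
      refine ⟨scottClosed_scottClosure _, ?_⟩
      obtain ⟨E, hE⟩ := hne
      obtain ⟨x, hx⟩ := (h𝒞 hE).2
      exact ⟨x, subset_scottClosure _ ⟨E, hE, hx⟩⟩
    have hsub : A ⊆ GammaSup 𝒟 := by
      intro a ha
      exact subset_scottClosure _ ⟨Set.Iic a, ⟨scottClosed_Iic a, ⟨a, le_refl a⟩⟩, le_refl a⟩
    exact (hBen 𝒟 hmem hsub).2
  · intro B C hB hC hBC
    set 𝒟 : Set (Set P) := {E | ScottClosed E ∧ E.Nonempty ∧ (E ⊆ B ∨ E ⊆ C)} with h𝒟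
    have hmem : MemH 𝒟 := by
      refine ⟨fun E hE => ⟨hE.1, hE.2.1⟩, ?_, ?_⟩
      · intro E hE a ha
        refine ⟨scottClosed_Iic a, ⟨a, le_refl a⟩, ?_⟩
        rcases hE.2.2 with h | h
        · exact Or.inl (fun x hx => hB.1 hx (h ha))
        · exact Or.inr (fun x hx => hC.1 hx (h ha))
      · intro 𝒞 h𝒞 hne hdir
        obtain ⟨E₀, hE₀⟩ := hne
        refine ⟨scottClosed_scottClosure _, ?_, ?_⟩
        · obtain ⟨x, hx⟩ := (h𝒞 hE₀).2.1
          exact ⟨x, subset_scottClosure _ ⟨E₀, hE₀, hx⟩⟩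
        · by_cases hall : ∀ E ∈ 𝒞, E ⊆ B
          · exact Or.inl (scottClosure_min hB (fun x ⟨E, hE, hx⟩ => hall E hE hx))
          · push_neg at hall
            obtain ⟨E₁, hE₁, hE₁B⟩ := hall
            refine Or.inr (scottClosure_min hC ?_)
            rintro x ⟨E, hE, hx⟩
            obtain ⟨F, hF, hEF, hE₁F⟩ := hdir E hE E₁ hE₁
            rcases (h𝒞 hF).2.2 with h | h
            · exact absurd (fun y hy => h (hE₁F hy)) hE₁B
            · exact h (hEF hx)
    have hsub : A ⊆ GammaSup 𝒟 := by
      intro a ha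
      have hIic : Set.Iic a ∈ 𝒟 := by
        refine ⟨scottClosed_Iic a, ⟨a, le_refl a⟩, ?_⟩
        rcases hBC ha with h | h
        · exact Or.inl (fun x hx => hB.1 hx h)
        · exact Or.inr (fun x hx => hC.1 hx h)
      exact subset_scottClosure _ ⟨Set.Iic a, hIic, le_refl a⟩
    exact (hBen 𝒟 hmem hsub).2.2
end

section
/- Let P be a poset. The set 𝒦(Γ(P)) of pre-C-compact elements of Γ(P) is closed under suprema in Γ(P) of directed subfamilies: if (A_i)_{i∈I} is a family of pre-C-compact elements of Γ(P) that is directed under inclusion, then its supremum in Γ(P) is pre-C-compact. Hence 𝒦(Γ(P)) is a dcpo under the inclusion order. -/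
lemma scottClosed_sInter {P : Type*} [Preorder P] {𝒞 : Set (Set P)}
    (h : ∀ C ∈ 𝒞, ScottClosed C) : ScottClosed (⋂₀ 𝒞) := by
  constructor
  · intro a b hab ha C hC
    exact (h C hC).1 hab (ha C hC)
  · intro D hD hne hdir a ha C hC
    exact (h C hC).2 D (fun x hx => hD hx C hC) hne hdir a ha

lemma scottClosure_subset_of_scottClosed {P : Type*} [Preorder P] {A B : Set P}
    (hAB : A ⊆ B) (hB : ScottClosed B) : scottClosure A ⊆ B :=
  fun _ hx => hx B ⟨hB, hAB⟩

lemma preCCompact_part1 {P : Type*} [PartialOrder P] (ι : Type*) (A : ι → Set P)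
    (hιne : Nonempty ι) (hpc : ∀ i : ι, PreCCompact (A i))
    (hdir : Directed (· ⊆ ·) A) : PreCCompact (GammaSup (Set.range A)) := by
  refine ⟨scottClosed_scottClosure _, ?_⟩
  intro 𝒟 h𝒟 hsub
  have hmem : ∀ i, A i ∈ 𝒟 := fun i =>
    (hpc i).2 𝒟 h𝒟
      (((Set.subset_sUnion_of_mem (Set.mem_range_self i)).trans (subset_scottClosure _)).trans hsub)
  exact h𝒟.2.2 (Set.range A) (Set.range_subset_iff.2 hmem) (Set.range_nonempty _)
    hdir.directedOn_range

/-- the pre-C-compact elements of `Γ(P)` are closed under suprema in `Γ(P)`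
of directed families; hence they form a dcpo under inclusion. -/
theorem preCCompact_directed_sup {P : Type*} [PartialOrder P] :
    (∀ (ι : Type*) (A : ι → Set P), Nonempty ι → (∀ i : ι, PreCCompact (A i)) →
      Directed (· ⊆ ·) A → PreCCompact (GammaSup (Set.range A))) ∧
    (∀ S : Set {A : Set P // PreCCompact A}, S.Nonempty → DirectedOn (· ≤ ·) S →
      ∃ m : {A : Set P // PreCCompact A}, IsLUB S m) := by
  refine ⟨fun ι A h1 h2 h3 => preCCompact_part1 ι A h1 h2 h3, ?_⟩
  intro S hSne hSdir
  have hne : Nonempty S := hSne.to_subtype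
  have hdir : Directed (· ⊆ ·) (fun s : S => s.1.1) := by
    intro s t
    obtain ⟨u, hu, hsu, htu⟩ := hSdir s.1 s.2 t.1 t.2
    exact ⟨⟨u, hu⟩, hsu, htu⟩
  obtain ⟨hsc, hb⟩ := preCCompact_part1 ↥S (fun s => s.1.1) hne (fun s => s.1.2) hdir
  refine ⟨⟨GammaSup (Set.range fun s : S => s.1.1), hsc, hb⟩, ?_, ?_⟩
  · intro s hs
    show s.1 ⊆ GammaSup (Set.range fun s : S => s.1.1)
    refine Set.Subset.trans ?_ (subset_scottClosure _)
    exact Set.subset_sUnion_of_mem ⟨⟨s, hs⟩, rfl⟩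
  · intro b hub
    show GammaSup (Set.range fun s : S => s.1.1) ⊆ b.1
    exact scottClosure_subset_of_scottClosed
      (Set.sUnion_subset (by rintro _ ⟨s, rfl⟩; exact hub s.2)) b.2.1
end

section
/- Let X be a T0 topological space. Then X is a monotone convergence space (the closure of every subset that is directed in the specialization order is the closure of a unique point) if and only if for every pre-C-compact element A of Γ(X) there exists a unique point x ∈ X with A = cl({x}) = ↓x. -/
/-- `𝒟 ∈ ℋ`: `𝒟` is a family of nonempty closed sets such that `↓a = cl {a} ∈ 𝒟` whenever
`a ∈ A ∈ 𝒟`, `𝒟` is d-closed (the supremum in `Γ(X)`, i.e. the closure of the union, of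
any nonempty directed subfamily of `𝒟` belongs to `𝒟`), and `⋃𝒟` is closed. -/
def MemHt {X : Type*} [TopologicalSpace X] (𝒟 : Set (Set X)) : Prop :=
  (∀ A ∈ 𝒟, IsClosed A ∧ A.Nonempty) ∧
  (∀ A ∈ 𝒟, ∀ a ∈ A, closure ({a} : Set X) ∈ 𝒟) ∧
  (∀ 𝒞 ⊆ 𝒟, 𝒞.Nonempty → DirectedOn (· ⊆ ·) 𝒞 → closure (⋃₀ 𝒞) ∈ 𝒟) ∧
  IsClosed (⋃₀ 𝒟)

/-- `A` is beneath `B` (`A ≺ B`): for every `𝒟 ∈ ℋ` with `B ⊆ ⋃𝒟`, one has `A ∈ 𝒟`. -/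
def BeneathT {X : Type*} [TopologicalSpace X] (A B : Set X) : Prop :=
  ∀ 𝒟 : Set (Set X), MemHt 𝒟 → B ⊆ ⋃₀ 𝒟 → A ∈ 𝒟

/-- A pre-C-compact element of `Γ(X)`: a closed set `A` with `A ≺ A`. -/
def PreCCompactT {X : Type*} [TopologicalSpace X] (A : Set X) : Prop :=
  IsClosed A ∧ BeneathT A A

lemma closure_sUnion_image_closure_singleton {X : Type*} [TopologicalSpace X] (D : Set X) :
    closure (⋃₀ ((fun a => closure ({a} : Set X)) '' D)) = closure D := by
  apply subset_antisymm
  · refine closure_minimal ?_ isClosed_closure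
    rintro x ⟨_, ⟨a, ha, rfl⟩, hx⟩
    exact closure_mono (Set.singleton_subset_iff.2 ha) hx
  · exact closure_mono fun a ha => ⟨_, ⟨a, ha, rfl⟩, subset_closure rfl⟩

lemma closure_singleton_eq_uniq {X : Type*} [TopologicalSpace X] [T0Space X] {x y : X}
    (h : closure ({x} : Set X) = closure ({y} : Set X)) : x = y := by
  have hxy : x ⤳ y := specializes_iff_mem_closure.mpr
    (show y ∈ closure ({x} : Set X) from h ▸ subset_closure rfl)
  have hyx : y ⤳ x := specializes_iff_mem_closure.mpr
    (show x ∈ closure ({y} : Set X) from h ▸ subset_closure rfl)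
  exact (inseparable_iff_specializes_and.mpr ⟨hxy, hyx⟩).eq

/-- a `T₀` space is a monotone convergence space (the closure of every
directed set is the closure of a unique point) iff every pre-C-compact element of `Γ(X)`
is the closure `cl {x} = ↓x` of a unique point `x`. -/
theorem monotone_convergence_iff_preCCompact {X : Type*} [TopologicalSpace X] [T0Space X] :
    (∀ D : Set X, DirectedSubset D → ∃! x : X, closure D = closure ({x} : Set X)) ↔
    (∀ A : Set X, PreCCompactT A → ∃! x : X, A = closure ({x} : Set X)) := by
  constructor
  · intro hmc A ⟨hAcl, hAben⟩
    set 𝒟 : Set (Set X) := (fun a => closure ({a} : Set X)) '' A with h𝒟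
    have hUn : ⋃₀ 𝒟 = A := by
      apply subset_antisymm
      · rintro x ⟨_, ⟨a, ha, rfl⟩, hx⟩
        exact hAcl.closure_subset_iff.mpr (Set.singleton_subset_iff.2 ha) hx
      · intro a ha; exact ⟨_, ⟨a, ha, rfl⟩, subset_closure rfl⟩
    have hmem : MemHt 𝒟 := by
      refine ⟨?_, ?_, ?_, hUn ▸ hAcl⟩
      · rintro _ ⟨a, ha, rfl⟩
        exact ⟨isClosed_closure, ⟨a, subset_closure rfl⟩⟩
      · rintro _ ⟨a, ha, rfl⟩ b hb
        exact ⟨b, hAcl.closure_subset_iff.mpr (Set.singleton_subset_iff.2 ha) hb, rfl⟩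
      · intro 𝒞 h𝒞sub h𝒞ne h𝒞dir
        set D : Set X := {a ∈ A | closure ({a} : Set X) ∈ 𝒞} with hD
        have h𝒞eq : 𝒞 = (fun a => closure ({a} : Set X)) '' D := by
          apply subset_antisymm
          · intro C hC
            obtain ⟨a, ha, rfl⟩ := h𝒞sub hC
            exact ⟨a, ⟨ha, hC⟩, rfl⟩
          · rintro _ ⟨a, ⟨_, hC⟩, rfl⟩; exact hC
        have hDdir : DirectedSubset D := by
          constructor
          · obtain ⟨C, hC⟩ := h𝒞ne
            obtain ⟨a, ha, rfl⟩ := h𝒞sub hC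
            exact ⟨a, ha, hC⟩
          · rintro x ⟨hxA, hxC⟩ y ⟨hyA, hyC⟩
            obtain ⟨C, hC, hx, hy⟩ := h𝒞dir _ hxC _ hyC
            obtain ⟨c, hc, rfl⟩ := h𝒞sub hC
            exact ⟨c, ⟨hc, hC⟩, hx (subset_closure rfl), hy (subset_closure rfl)⟩
        obtain ⟨x, hx, -⟩ := hmc D hDdir
        have hclos : closure (⋃₀ 𝒞) = closure ({x} : Set X) := by
          rw [h𝒞eq, closure_sUnion_image_closure_singleton, hx]
        have hxA : x ∈ A := by
          have : closure ({x} : Set X) ⊆ A := by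
            rw [← hx]
            exact hAcl.closure_subset_iff.mpr fun a ha => ha.1
          exact this (subset_closure rfl)
        rw [hclos]
        exact ⟨x, hxA, rfl⟩
    have hA𝒟 : A ∈ 𝒟 := hAben 𝒟 hmem (hUn ▸ subset_rfl)
    obtain ⟨a, _, rfl⟩ := hA𝒟
    exact ⟨a, rfl, fun y hy => closure_singleton_eq_uniq hy.symm⟩
  · intro hpc D hD
    have hpre : PreCCompactT (closure D) := by
      refine ⟨isClosed_closure, ?_⟩
      intro 𝒟 ⟨h1, h2, h3, h4⟩ hsub
      set 𝒞 : Set (Set X) := (fun a => closure ({a} : Set X)) '' D with h𝒞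
      have h𝒞sub : 𝒞 ⊆ 𝒟 := by
        rintro _ ⟨a, ha, rfl⟩
        obtain ⟨B, hB, haB⟩ := hsub (subset_closure ha)
        exact h2 B hB a haB
      have h𝒞ne : 𝒞.Nonempty := hD.1.image _
      have h𝒞dir : DirectedOn (· ⊆ ·) 𝒞 := by
        rintro _ ⟨a, ha, rfl⟩ _ ⟨b, hb, rfl⟩
        obtain ⟨c, hc, hac, hbc⟩ := hD.2 a ha b hb
        exact ⟨_, ⟨c, hc, rfl⟩,
          closure_minimal (Set.singleton_subset_iff.2 hac) isClosed_closure,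
          closure_minimal (Set.singleton_subset_iff.2 hbc) isClosed_closure⟩
      have := h3 𝒞 h𝒞sub h𝒞ne h𝒞dir
      rwa [h𝒞, closure_sUnion_image_closure_singleton] at this
    obtain ⟨x, hx, hu⟩ := hpc _ hpre
    exact ⟨x, hx, hu⟩
end
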